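/- arXiv:2507.16017 — 9 statements merged into one kernel-verified Lean document; each statement's English description precedes it below -/
import Mathlib

section
/- Let Γ be a crystallographic group of dimension n, viewed as a subgroup of Aff(n). If an affine transformation α ∈ Aff(n) satisfies α(x) ∈ Γ·x for every x ∈ ℝⁿ, then α ∈ Γ. -/
/-- Euclidean `n`-space. -/
abbrev E (n : ℕ) := EuclideanSpace ℝ (Fin n)

/-- `AffE n` is the group of invertible affine transformations of Euclidean `n`-space. -/
abbrev AffE (n : ℕ) := E n ≃ᵃ[ℝ] E n

/-- We topologize `Aff(n)` via the topology of pointwise convergence (for affine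
transformations this coincides with the compact-open and the norm topologies). -/
noncomputable instance affTop (n : ℕ) : TopologicalSpace (AffE n) :=
  TopologicalSpace.induced (fun α => (⇑α : E n → E n)) inferInstance

/-- The orbit equivalence relation on `ℝⁿ` induced by a subgroup `Γ ≤ Aff(n)`;
its quotient is the orbit space `ℝⁿ/Γ`. -/
def orbitSetoid (n : ℕ) (Γ : Subgroup (AffE n)) : Setoid (E n) where
  r x y := ∃ γ ∈ Γ, γ x = y
  iseqv := by
    constructor
    · exact fun x => ⟨1, Γ.one_mem, rfl⟩
    · rintro x y ⟨γ, hγ, rfl⟩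
      exact ⟨γ⁻¹, Γ.inv_mem hγ, by rw [AffineEquiv.inv_def, AffineEquiv.symm_apply_apply]⟩
    · rintro x y z ⟨γ, hγ, rfl⟩ ⟨δ, hδ, rfl⟩
      exact ⟨δ * γ, Γ.mul_mem hδ hγ, rfl⟩

/-- Pointwise formula for an affine equivalence in terms of its values at `0` and the
standard basis vectors. -/
lemma affE_apply_eq (n : ℕ) (α : AffE n) (x : E n) :
    α x = α 0 + ∑ i, x i • (α (EuclideanSpace.single i 1) - α 0) := by
  have h0 : ∀ y : E n, α y = α.linear y + α 0 := by
    intro y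
    have := α.toAffineMap.map_vadd 0 y
    simpa [vadd_eq_add] using this
  have hx : x = ∑ i, x i • EuclideanSpace.single i (1:ℝ) := by
    have := (EuclideanSpace.basisFun (Fin n) ℝ).toBasis.sum_repr x
    simpa [EuclideanSpace.basisFun_repr, EuclideanSpace.basisFun_apply] using this.symm
  calc α x = α.linear x + α 0 := h0 x
    _ = α 0 + ∑ i, x i • (α (EuclideanSpace.single i 1) - α 0) := by
        conv_lhs => rw [hx]
        simp only [map_sum, map_smul]
        rw [add_comm]
        congr 1
        refine Finset.sum_congr rfl fun i _ => ?_
        congr 1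
        rw [h0 (EuclideanSpace.single i 1)]
        abel

/-- The pointwise-convergence topology on `AffE n` is induced by finitely many evaluations. -/
lemma affTop_eq_induced (n : ℕ) :
    affTop n = TopologicalSpace.induced
      (fun α : AffE n => ((α 0, fun i : Fin n => α (EuclideanSpace.single i 1)) :
        E n × (Fin n → E n))) inferInstance := by
  set e : AffE n → E n × (Fin n → E n) :=
    fun α => (α 0, fun i : Fin n => α (EuclideanSpace.single i 1)) with he
  have hev : ∀ y : E n, Continuous fun α : AffE n => α y := fun y =>
    (continuous_apply y).comp continuous_induced_dom
  have h2 : Continuous e := (hev 0).prodMk (continuous_pi fun i => hev _)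
  have hF : Continuous fun p : E n × (Fin n → E n) =>
      (fun x : E n => p.1 + ∑ i, x i • (p.2 i - p.1) : E n → E n) := by
    refine continuous_pi fun x => ?_
    fun_prop
  have h1 : @Continuous (AffE n) (E n → E n)
      (TopologicalSpace.induced e inferInstance) _ (fun α => (⇑α : E n → E n)) := by
    have hcoe : (fun α : AffE n => (⇑α : E n → E n)) =
        (fun p : E n × (Fin n → E n) => (fun x : E n => p.1 + ∑ i, x i • (p.2 i - p.1))) ∘ e :=
      funext fun α => funext fun x => affE_apply_eq n α x
    rw [hcoe]
    exact @Continuous.comp (AffE n) (E n × (Fin n → E n)) (E n → E n)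
      (TopologicalSpace.induced e inferInstance) _ _ _ _ hF
      (@continuous_induced_dom _ _ e inferInstance)
  refine le_antisymm ?_ ?_
  · exact continuous_iff_le_induced.mp h2
  · exact continuous_iff_le_induced.mp h1

/-- The equalizer identity for affine equivalences. -/
lemma affE_combo (n : ℕ) (f : AffE n) (c : ℝ) (p1 p2 p3 : E n) :
    f (c • (p1 -ᵥ p2) +ᵥ p3) = c • (f p1 -ᵥ f p2) +ᵥ f p3 := by
  have : f.toAffineMap (c • (p1 -ᵥ p2) +ᵥ p3) = c • (f p1 -ᵥ f p2) +ᵥ f p3 := by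
    rw [AffineMap.map_vadd, map_smul, AffineMap.linearMap_vsub]
    rfl
  exact this

/-- Let `Γ` be a crystallographic group of dimension `n`: a subgroup of
`Aff(n)` consisting of isometries of `ℝⁿ`, discrete, and with compact orbit space `ℝⁿ/Γ`.
If `α ∈ Aff(n)` satisfies `α(x) ∈ Γ·x` for every `x`, then `α ∈ Γ`. -/
theorem stmt2 (n : ℕ) (Γ : Subgroup (AffE n))
    (hiso : ∀ γ : AffE n, γ ∈ Γ → Isometry (⇑γ : E n → E n))
    (hdisc : DiscreteTopology ↥Γ)
    (hcpt : CompactSpace (Quotient (orbitSetoid n Γ)))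
    (α : AffE n) (hα : ∀ x : E n, ∃ γ ∈ Γ, γ x = α x) :
    α ∈ Γ := by
  -- `AffE n` is second countable.
  haveI hsc : SecondCountableTopology (AffE n) := by
    have h := TopologicalSpace.secondCountableTopology_induced (AffE n) (E n × (Fin n → E n))
      (fun α : AffE n => ((α 0, fun i : Fin n => α (EuclideanSpace.single i 1)) :
        E n × (Fin n → E n)))
    rwa [← affTop_eq_induced n] at h
  -- hence the discrete subgroup `Γ` is countable.
  haveI : SecondCountableTopology ↥Γ :=
    TopologicalSpace.secondCountableTopology_induced ↥Γ (AffE n) ((↑) : ↥Γ → AffE n)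
  haveI hcount : Countable ↥Γ := TopologicalSpace.separableSpace_iff_countable.mp inferInstance
  -- Baire category: some `γ ∈ Γ` agrees with `α` on a set with nonempty interior.
  have hclosed : ∀ γ : ↥Γ, IsClosed {x : E n | (γ : AffE n) x = α x} := fun γ =>
    isClosed_eq (hiso _ γ.2).continuous α.toAffineMap.continuous_of_finiteDimensional
  have hunion : ⋃ γ : ↥Γ, {x : E n | (γ : AffE n) x = α x} = Set.univ := by
    ext x
    simp only [Set.mem_iUnion, Set.mem_setOf_eq, Set.mem_univ, iff_true]
    obtain ⟨γ, hγ, hγx⟩ := hα x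
    exact ⟨⟨γ, hγ⟩, hγx⟩
  obtain ⟨γ, hne⟩ := nonempty_interior_of_iUnion_of_closed hclosed hunion
  -- The equalizer of `γ` and `α` is an affine subspace containing a nonempty open set.
  set S : AffineSubspace ℝ (E n) :=
    { carrier := {x : E n | (γ : AffE n) x = α x}
      smul_vsub_vadd_mem' := by
        intro c p1 p2 p3 h1 h2 h3
        simp only [Set.mem_setOf_eq] at h1 h2 h3 ⊢
        rw [affE_combo, affE_combo, h1, h2, h3] } with hSdef
  have hspan : affineSpan ℝ (interior {x : E n | (γ : AffE n) x = α x}) = ⊤ :=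
    isOpen_interior.affineSpan_eq_top hne
  have hle : affineSpan ℝ (interior {x : E n | (γ : AffE n) x = α x}) ≤ S :=
    affineSpan_le.mpr interior_subset
  rw [hspan] at hle
  have hall : ∀ x : E n, (γ : AffE n) x = α x := fun x =>
    hle (AffineSubspace.mem_top ℝ (E n) x)
  have : α = (γ : AffE n) := AffineEquiv.ext fun x => (hall x).symm
  rw [this]
  exact γ.2
end

section
/- Let Γ be a crystallographic group of dimension n, viewed as a subgroup of Aff(n), and let F ∈ Aff(n) be such that for all x, y ∈ ℝⁿ one has Γ·x = Γ·y if and only if Γ·F(x) = Γ·F(y) (so that F descends to a well-defined bijection of the orbit space ℝⁿ/Γ). Then F normalizes Γ, i.e. FΓF⁻¹ = Γ. -/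
/-!
A discrete subgroup of the second countable group `Aff(n)` is countable. For `γ ∈ Γ`, the map
`FγF⁻¹` sends each point `x` into its own `Γ`-orbit, so it agrees at `x` with some element of `Γ`.
By Baire, one of the countably many closed agreement sets has interior, and an affine map is
determined by its values on a nonempty open set; hence `FγF⁻¹ ∈ Γ`, and likewise for `F⁻¹`.
-/

open Topology

lemma AffineMap.apply_eq_sum_coord_smul {k V W ι : Type*} [Ring k] [AddCommGroup V] [Module k V]
    [AddCommGroup W] [Module k W] [Fintype ι] (b : AffineBasis ι k V) (f : V →ᵃ[k] W) (x : V) :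
    f x = ∑ i, b.coord i x • f (b i) := by
  have h := Finset.univ.map_affineCombination b (b.coord · x) (b.sum_coord_apply_eq_one x) f
  rwa [b.affineCombination_coord_eq_self x,
    Finset.univ.affineCombination_eq_linear_combination _ _ (b.sum_coord_apply_eq_one x)] at h

lemma isInducing_eval_affineBasis {n : ℕ} {ι : Type*} [Fintype ι] (b : AffineBasis ι ℝ (E n)) :
    IsInducing (fun (α : AffE n) (i : ι) => α (b i)) := by
  have hcoe : IsInducing (fun α : AffE n => (⇑α : E n → E n)) := .induced _
  refine .of_comp (g := fun (v : ι → E n) (x : E n) => ∑ i, b.coord i x • v i)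
    (continuous_pi fun i => (continuous_apply (b i)).comp hcoe.continuous)
    (continuous_pi fun x => by fun_prop) ?_
  convert hcoe using 1
  funext α x
  exact (α.toAffineMap.apply_eq_sum_coord_smul b x).symm

instance (n : ℕ) : SecondCountableTopology (AffE n) := by
  obtain ⟨b⟩ : Nonempty (AffineBasis (Fin (n + 1)) ℝ (E n)) :=
    AffineBasis.exists_affineBasis_of_finiteDimensional (by simp)
  exact (isInducing_eval_affineBasis b).secondCountableTopology

theorem AffineMap.exists_eq_of_forall_exists_apply_eq {V W ι : Type*}
    [NormedAddCommGroup V] [NormedSpace ℝ V] [FiniteDimensional ℝ V]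
    [NormedAddCommGroup W] [NormedSpace ℝ W] [Countable ι]
    (f : ι → V →ᵃ[ℝ] W) (g : V →ᵃ[ℝ] W) (h : ∀ x, ∃ i, f i x = g x) : ∃ i, f i = g := by
  have hclosed : ∀ i, IsClosed {x | f i x = g x} := fun i =>
    isClosed_eq (f i).continuous_of_finiteDimensional g.continuous_of_finiteDimensional
  obtain ⟨i, hi⟩ := nonempty_interior_of_iUnion_of_closed hclosed (Set.iUnion_eq_univ_iff.2 h)
  refine ⟨i, AffineMap.ext_on (isOpen_interior.affineSpan_eq_top hi) fun x hx => ?_⟩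
  exact (interior_subset hx : x ∈ {x | f i x = g x})

theorem AffineEquiv.conj_mem_of_mapsTo_orbits {V : Type*}
    [NormedAddCommGroup V] [NormedSpace ℝ V] [FiniteDimensional ℝ V]
    (Γ : Subgroup (V ≃ᵃ[ℝ] V)) [Countable Γ] (F : V ≃ᵃ[ℝ] V)
    (hF : ∀ x y, (∃ γ ∈ Γ, γ x = y) → ∃ γ ∈ Γ, γ (F x) = F y) {γ : V ≃ᵃ[ℝ] V} (hγ : γ ∈ Γ) :
    F * γ * F⁻¹ ∈ Γ := by
  have hpointwise (x : V) : ∃ δ : Γ, (δ : V ≃ᵃ[ℝ] V) x = (F * γ * F⁻¹) x := by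
    obtain ⟨δ, hδΓ, hδx⟩ := hF (F.symm x) (γ (F.symm x)) ⟨γ, hγ, rfl⟩
    exact ⟨⟨δ, hδΓ⟩, by simpa [AffineEquiv.inv_def] using hδx⟩
  obtain ⟨δ, hδ⟩ := AffineMap.exists_eq_of_forall_exists_apply_eq
    (fun δ : Γ => (δ : V ≃ᵃ[ℝ] V).toAffineMap) (F * γ * F⁻¹).toAffineMap hpointwise
  exact AffineEquiv.toAffineMap_inj.mp hδ ▸ δ.2

theorem stmt3_general (n : ℕ) (Γ : Subgroup (AffE n))
    (hdisc : DiscreteTopology ↥Γ)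
    (F : AffE n)
    (hF : ∀ x y : E n, (∃ γ ∈ Γ, γ x = y) ↔ (∃ γ ∈ Γ, γ (F x) = F y)) :
    F ∈ Subgroup.normalizer (Γ : Set (AffE n)) := by
  have : Countable Γ := TopologicalSpace.separableSpace_iff_countable.mp inferInstance
  have hF_inv (x y : E n) (hxy : ∃ γ ∈ Γ, γ x = y) : ∃ γ ∈ Γ, γ (F⁻¹ x) = F⁻¹ y :=
    (hF (F⁻¹ x) (F⁻¹ y)).mpr (by simpa [AffineEquiv.inv_def] using hxy)
  refine Subgroup.mem_normalizer_iff.mpr fun γ =>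
    ⟨fun hγ => AffineEquiv.conj_mem_of_mapsTo_orbits Γ F (fun x y => (hF x y).mp) hγ, fun hγ => ?_⟩
  simpa [mul_assoc] using AffineEquiv.conj_mem_of_mapsTo_orbits Γ F⁻¹ hF_inv hγ

/-- Let `Γ` be a crystallographic group of dimension `n` (a discrete
subgroup of `Aff(n)` consisting of isometries, with compact orbit space `ℝⁿ/Γ`), and let
`F ∈ Aff(n)` be such that for all `x, y` one has `Γ·x = Γ·y` iff `Γ·F(x) = Γ·F(y)` (so `F`
descends to a bijection of `ℝⁿ/Γ`).  Then `F` normalizes `Γ`, i.e. `FΓF⁻¹ = Γ`. -/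
theorem stmt3 (n : ℕ) (Γ : Subgroup (AffE n))
    (hiso : ∀ γ : AffE n, γ ∈ Γ → Isometry (⇑γ : E n → E n))
    (hdisc : DiscreteTopology ↥Γ)
    (hcpt : CompactSpace (Quotient (orbitSetoid n Γ)))
    (F : AffE n)
    (hF : ∀ x y : E n, (∃ γ ∈ Γ, γ x = y) ↔ (∃ γ ∈ Γ, γ (F x) = F y)) :
    F ∈ Subgroup.normalizer (Γ : Set (AffE n)) :=
  stmt3_general n Γ hdisc F hF
end

section
/- Let Γ ≤ Aff(n) be a subgroup whose translation lattice Λ_Γ is a full lattice in ℝⁿ and whose holonomy F_Γ is finite. Write N = N_{Aff(n)}(Γ) for the normalizer and C = C_{Aff(n)}(Γ) for the centralizer of Γ in Aff(n). Then the subgroup Γ·C of N (which is a subgroup since C centralizes Γ and C ⊆ N) has finite index in N ∩ τ⁻¹(F_Γ). -/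
/-!
Write `Λ` for the translation lattice and `F` for the (finite) holonomy of `Γ`, and let
`avg = |F|⁻¹ ∑_{A ∈ F} A` be the averaging projection onto the `F`-fixed vectors.
An element `g` of `N ∩ τ⁻¹(F)` factors as `g = t_c γ` with `γ ∈ Γ` and `t_c` a translation
normalizing `Γ`; normalizing forces `c - A c ∈ Λ` for every `A ∈ F`, hence
`c - avg c = |F|⁻¹ ∑_A (c - A c) ∈ |F|⁻¹ Λ`. Since `Λ` is finitely generated, `|F|⁻¹ Λ / Λ` is
finite. If two elements `g₁ = t_{c₁} γ₁`, `g₂ = t_{c₂} γ₂` give the same class of `c - avg c`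
modulo `Λ`, then `c₂ - c₁` is a lattice vector plus an `F`-fixed vector; translations by
`F`-fixed vectors centralize `Γ`, so `g₁⁻¹ g₂ ∈ Γ · C`.
-/

/-- `Aff n` is the group of invertible affine transformations of `ℝⁿ`. -/
abbrev Aff (n : ℕ) := (Fin n → ℝ) ≃ᵃ[ℝ] (Fin n → ℝ)

/-- `τ : Aff(n) → GL(n,ℝ)`, sending an affine transformation to its linear part. -/
noncomputable def tau (n : ℕ) : Aff n →* ((Fin n → ℝ) ≃ₗ[ℝ] (Fin n → ℝ)) :=
  AffineEquiv.linearHom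

/-- The translation lattice `Λ_Γ` of a subgroup `Γ ≤ Aff(n)`. -/
def transLattice (n : ℕ) (Γ : Subgroup (Aff n)) : Set (Fin n → ℝ) :=
  {v | AffineEquiv.constVAdd ℝ (Fin n → ℝ) v ∈ Γ}

theorem Subgroup.relIndex_ne_zero_of_finite_image {G α : Type*} [Group G] {H K : Subgroup G}
    (f : G → α) (hfin : (f '' K).Finite) (hf : ∀ a ∈ K, ∀ b ∈ K, f a = f b → a⁻¹ * b ∈ H) :
    H.relIndex K ≠ 0 := by
  have : Finite (K ⧸ H.subgroupOf K) := by
    have := hfin.to_subtype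
    refine Finite.of_injective (fun q : K ⧸ H.subgroupOf K =>
      (⟨f q.out, q.out, q.out.2, rfl⟩ : f '' K)) fun q₁ q₂ h => ?_
    rw [← q₁.out_eq', ← q₂.out_eq', QuotientGroup.eq, mem_subgroupOf]
    exact hf _ q₁.out.2 _ q₂.out.2 (congr_arg Subtype.val h)
  exact index_ne_zero_of_finite

theorem AddSubgroup.finite_range_mk_inv_natCast_smul {k V : Type*} [DivisionRing k]
    [AddCommGroup V] [Module k V] (Λ : AddSubgroup V) [AddGroup.FG Λ] {m : ℕ} (hm : (m : k) ≠ 0) :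
    (Set.range fun l : Λ => (QuotientAddGroup.mk ((m : k)⁻¹ • (l : V)) : V ⧸ Λ)).Finite := by
  let φ : Λ →+ V ⧸ Λ :=
    (QuotientAddGroup.mk' Λ).comp ((DistribSMul.toAddMonoidHom V (m : k)⁻¹).comp Λ.subtype)
  have : AddGroup.FG φ.range := AddGroup.fg_of_surjective φ.rangeRestrict_surjective
  have : Finite φ.range := by
    refine AddCommGroup.finite_of_fg_isAddTorsion _ fun ⟨_, l, hl⟩ => ?_
    have hm₀ : m ≠ 0 := by rintro rfl; simp at hm
    refine isOfFinAddOrder_iff_nsmul_eq_zero.mpr ⟨m, Nat.pos_of_ne_zero hm₀, ?_⟩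
    subst hl
    ext
    simp [φ, ← QuotientAddGroup.mk_nsmul, ← Nat.cast_smul_eq_nsmul k, smul_smul, hm]
  exact (Set.finite_coe_iff.mp this).subset (by rintro _ ⟨l, rfl⟩; exact ⟨l, rfl⟩)

theorem AddSubgroup.fg_of_discreteTopology {E : Type*} [NormedAddCommGroup E] [NormedSpace ℝ E]
    [FiniteDimensional ℝ E] (Λ : AddSubgroup E) [hΛ : DiscreteTopology Λ] : AddGroup.FG Λ :=
  have : DiscreteTopology Λ.toIntSubmodule := hΛ
  Module.Finite.iff_addGroup_fg.mp (instModuleFinite_of_discrete_submodule Λ.toIntSubmodule)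

theorem Representation.sub_averageMap {k G V : Type*} [CommRing k] [Group G] [AddCommGroup V]
    [Module k V] [Fintype G] [Invertible (Fintype.card G : k)] (ρ : Representation k G V)
    (v : V) : v - ρ.averageMap v = ⅟(Fintype.card G : k) • ∑ g, (v - ρ g v) := by
  rw [Finset.sum_sub_distrib, Finset.sum_const, Finset.card_univ, smul_sub,
    ← Nat.cast_smul_eq_nsmul k, smul_smul, invOf_mul_self, one_smul]
  simp [GroupAlgebra.average, map_sum]

namespace AffineEquiv

section Ring

variable {k V P : Type*} [Ring k] [AddCommGroup V] [Module k V] [AddTorsor V P]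

theorem constVAdd_mul (v w : V) :
    constVAdd k P v * constVAdd k P w = constVAdd k P (v + w) :=
  (constVAdd_add k P v w).symm

theorem constVAdd_inv (v : V) : (constVAdd k P v)⁻¹ = constVAdd k P (-v) :=
  constVAdd_symm k P v

theorem mul_constVAdd_mul_inv (g : P ≃ᵃ[k] P) (v : V) :
    g * constVAdd k P v * g⁻¹ = constVAdd k P (g.linear v) := by
  ext p
  simp [inv_def]

theorem exists_eq_constVAdd_mul_of_linear_eq {g γ : P ≃ᵃ[k] P} (h : g.linear = γ.linear) :
    ∃ v, g = constVAdd k P v * γ := by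
  obtain ⟨q⟩ := AddTorsor.nonempty (G := V) (P := P)
  refine ⟨g q -ᵥ γ q, ext fun p => ?_⟩
  have hvsub : g p -ᵥ g q = γ p -ᵥ γ q :=
    (g.toAffineMap.linearMap_vsub p q).symm.trans
      ((congr($h (p -ᵥ q))).trans (γ.toAffineMap.linearMap_vsub p q))
  rw [coe_mul, Function.comp_apply, constVAdd_apply, eq_vadd_iff_vsub_eq,
    ← vsub_sub_vsub_cancel_right _ _ (g q), hvsub, vsub_sub_vsub_cancel_left]

def translationLattice (Γ : Subgroup (P ≃ᵃ[k] P)) : AddSubgroup V :=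
  (Γ.comap (constVAddHom k P)).toAddSubgroup'

theorem mem_translationLattice {Γ : Subgroup (P ≃ᵃ[k] P)} {v : V} :
    v ∈ translationLattice Γ ↔ constVAdd k P v ∈ Γ :=
  Iff.rfl

def holonomy (Γ : Subgroup (P ≃ᵃ[k] P)) : Subgroup (V ≃ₗ[k] V) :=
  Γ.map linearHom

variable {Γ : Subgroup (P ≃ᵃ[k] P)}

theorem sub_linear_mem_translationLattice {c : V}
    (hc : constVAdd k P c ∈ Subgroup.normalizer (Γ : Set (P ≃ᵃ[k] P))) {γ : P ≃ᵃ[k] P}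
    (hγ : γ ∈ Γ) : c - γ.linear c ∈ translationLattice Γ := by
  have hcomm : constVAdd k P c * γ * (constVAdd k P c)⁻¹ * γ⁻¹ =
      constVAdd k P (c - γ.linear c) := by
    rw [constVAdd_inv, mul_assoc (_ * γ), mul_assoc, ← mul_assoc γ, mul_constVAdd_mul_inv,
      constVAdd_mul, map_neg, ← sub_eq_add_neg]
  rw [mem_translationLattice, ← hcomm]
  exact mul_mem ((Subgroup.mem_normalizer_iff.mp hc γ).mp hγ) (inv_mem hγ)

theorem constVAdd_mem_centralizer {v : V} (hv : ∀ γ ∈ Γ, γ.linear v = v) :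
    constVAdd k P v ∈ Subgroup.centralizer (Γ : Set (P ≃ᵃ[k] P)) := by
  refine Subgroup.mem_centralizer_iff.mpr fun γ hγ => ?_
  refine mul_inv_eq_iff_eq_mul.mp ?_
  rw [mul_constVAdd_mul_inv, hv γ hγ]

theorem exists_constVAdd_inv_mul_mem {g : P ≃ᵃ[k] P}
    (hg : g ∈ Subgroup.normalizer (Γ : Set (P ≃ᵃ[k] P)) ⊓ (holonomy Γ).comap linearHom) :
    ∃ c, constVAdd k P c ∈ Subgroup.normalizer (Γ : Set (P ≃ᵃ[k] P)) ∧
      (constVAdd k P c)⁻¹ * g ∈ Γ := by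
  obtain ⟨hgN, hgF⟩ := Subgroup.mem_inf.mp hg
  obtain ⟨γ, hγ, hlin⟩ := Subgroup.mem_map.mp (Subgroup.mem_comap.mp hgF)
  obtain ⟨c, rfl⟩ := exists_eq_constVAdd_mul_of_linear_eq hlin.symm
  refine ⟨c, ?_, by rwa [inv_mul_cancel_left]⟩
  simpa using mul_mem hgN (inv_mem (Subgroup.le_normalizer hγ))

end Ring

section Field

variable {k V P : Type*} [Field k] [CharZero k] [AddCommGroup V] [Module k V] [AddTorsor V P]
  {Γ : Subgroup (P ≃ᵃ[k] P)}

variable (Γ) in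
def holonomyRep : Representation k (holonomy Γ) V :=
  LinearEquiv.automorphismGroup.toLinearMapMonoidHom.comp (holonomy Γ).subtype

variable [Fintype (holonomy Γ)]

theorem constVAdd_mem_sup_centralizer {c : V}
    (hc : c - (holonomyRep Γ).averageMap c ∈ translationLattice Γ) :
    constVAdd k P c ∈ Γ ⊔ Subgroup.centralizer (Γ : Set (P ≃ᵃ[k] P)) := by
  have hfix : (holonomyRep Γ).averageMap c ∈ (holonomyRep Γ).invariants :=
    (holonomyRep Γ).averageMap_invariant c
  rw [← add_sub_cancel ((holonomyRep Γ).averageMap c) c, ← constVAdd_mul]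
  exact mul_mem (Subgroup.mem_sup_right (constVAdd_mem_centralizer fun γ hγ =>
    hfix ⟨γ.linear, Subgroup.mem_map_of_mem _ hγ⟩)) (Subgroup.mem_sup_left hc)

theorem mk_sub_averageMap_mem_range {c : V}
    (hc : constVAdd k P c ∈ Subgroup.normalizer (Γ : Set (P ≃ᵃ[k] P))) :
    (QuotientAddGroup.mk (c - (holonomyRep Γ).averageMap c) : V ⧸ translationLattice Γ) ∈
      Set.range fun l : translationLattice Γ =>
        (QuotientAddGroup.mk ((Fintype.card (holonomy Γ) : k)⁻¹ • (l : V)) :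
          V ⧸ translationLattice Γ) := by
  have hsum : ∑ A : holonomy Γ, (c - holonomyRep Γ A c) ∈ translationLattice Γ := by
    refine AddSubgroup.sum_mem _ fun ⟨_, γ, hγ, rfl⟩ _ => ?_
    exact sub_linear_mem_translationLattice hc hγ
  exact ⟨⟨_, hsum⟩, by rw [Representation.sub_averageMap, invOf_eq_inv]⟩

omit [Fintype (holonomy Γ)] in
theorem relIndex_sup_centralizer_ne_zero [Finite (holonomy Γ)]
    [AddGroup.FG (translationLattice Γ)] :
    (Γ ⊔ Subgroup.centralizer (Γ : Set (P ≃ᵃ[k] P))).relIndex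
      (Subgroup.normalizer (Γ : Set (P ≃ᵃ[k] P)) ⊓ (holonomy Γ).comap linearHom) ≠ 0 := by
  have := Fintype.ofFinite (holonomy Γ)
  choose! c hcN hcΓ using fun (g : P ≃ᵃ[k] P)
    (hg : g ∈ Subgroup.normalizer (Γ : Set (P ≃ᵃ[k] P)) ⊓ (holonomy Γ).comap linearHom) =>
    exists_constVAdd_inv_mul_mem (V := V) hg
  refine Subgroup.relIndex_ne_zero_of_finite_image
    (fun g => (QuotientAddGroup.mk (c g - (holonomyRep Γ).averageMap (c g)) :
      V ⧸ translationLattice Γ)) ?_ fun a ha b hb hf => ?_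
  · refine ((translationLattice Γ).finite_range_mk_inv_natCast_smul (k := k)
      (m := Fintype.card (holonomy Γ)) (Nat.cast_ne_zero.mpr Fintype.card_ne_zero)).subset ?_
    rintro _ ⟨g, hg, rfl⟩
    exact mk_sub_averageMap_mem_range (hcN g hg)
  have hab : constVAdd k P (c b - c a) ∈ Γ ⊔ Subgroup.centralizer (Γ : Set (P ≃ᵃ[k] P)) := by
    refine constVAdd_mem_sup_centralizer ?_
    convert QuotientAddGroup.eq.mp hf using 1
    rw [map_sub]
    abel
  have hmul : constVAdd k P (c a) * constVAdd k P (c b - c a) = constVAdd k P (c b) := by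
    rw [constVAdd_mul, add_sub_cancel]
  rw [show a⁻¹ * b = ((constVAdd k P (c a))⁻¹ * a)⁻¹ * constVAdd k P (c b - c a) *
      ((constVAdd k P (c b))⁻¹ * b) by rw [← hmul]; group]
  exact mul_mem (mul_mem (inv_mem (Subgroup.mem_sup_left (hcΓ a ha))) hab)
    (Subgroup.mem_sup_left (hcΓ b hb))

end Field

end AffineEquiv

open AffineEquiv in
theorem stmt4_general (n : ℕ) (Γ : Subgroup (Aff n))
    (hdisc : DiscreteTopology ↥(transLattice n Γ))
    (hfin : Finite ↥(Γ.map (tau n))) :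
    (Γ ⊔ Subgroup.centralizer (Γ : Set (Aff n))).relIndex
      (Subgroup.normalizer (Γ : Set (Aff n)) ⊓ (Γ.map (tau n)).comap (tau n)) ≠ 0 := by
  have : DiscreteTopology (translationLattice (k := ℝ) Γ) := hdisc
  have : AddGroup.FG (translationLattice (k := ℝ) Γ) :=
    (translationLattice Γ).fg_of_discreteTopology
  have : Finite (holonomy Γ) := hfin
  exact relIndex_sup_centralizer_ne_zero

/-- Let `Γ ≤ Aff(n)` have full translation lattice `Λ_Γ` (a discrete
additive subgroup spanning `ℝⁿ`) and finite holonomy `F_Γ = τ(Γ)`.  Then the subgroup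
`Γ·C` generated by `Γ` and the centralizer `C = C_{Aff(n)}(Γ)` has finite index in
`N ∩ τ⁻¹(F_Γ)`, where `N = N_{Aff(n)}(Γ)`. -/
theorem stmt4 (n : ℕ) (Γ : Subgroup (Aff n))
    (hdisc : DiscreteTopology ↥(transLattice n Γ))
    (hspan : Submodule.span ℝ (transLattice n Γ) = ⊤)
    (hfin : Finite ↥(Γ.map (tau n))) :
    (Γ ⊔ Subgroup.centralizer (Γ : Set (Aff n))).relIndex
      (Subgroup.normalizer (Γ : Set (Aff n)) ⊓ (Γ.map (tau n)).comap (tau n)) ≠ 0 :=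
  stmt4_general n Γ hdisc hfin
end

section
/- Let Λ be a full lattice in ℝⁿ and let H ≤ GL(n,ℝ) be a subgroup with h(Λ) = Λ for every h ∈ H. Then the right action of H on the coset space O(n)\GL(n,ℝ) by right multiplication is properly discontinuous: for every compact subset U ⊆ O(n)\GL(n,ℝ), the set {h ∈ H | U·h ∩ U ≠ ∅} is finite. -/
/-!
Lift the compact set `U` to a compact set `K ⊆ GL(n,ℝ)`. If `(O(n)a)·h = O(n)b` with `a, b ∈ K`,
then `h = a⁻¹ (a h b⁻¹) b ∈ K⁻¹ O(n) K`, a compact set. A matrix preserving `Λ` is determined by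
the images of a basis of `ℝⁿ` chosen inside `Λ`; these images lie in `Λ` and in a compact set, and
a discrete subgroup meets a compact set in finitely many points. Hence only finitely many `h ∈ H`
qualify.
-/

open Matrix

/-- The orthogonal group `O(n)` as a subgroup of `GL(n,ℝ)`. -/
def On (n : ℕ) : Subgroup (GL (Fin n) ℝ) where
  carrier := {A | (A : Matrix (Fin n) (Fin n) ℝ) ∈ Matrix.orthogonalGroup (Fin n) ℝ}
  one_mem' := by
    simp only [Set.mem_setOf_eq, Units.val_one]
    exact one_mem _
  mul_mem' := by
    intro a b ha hb
    simp only [Set.mem_setOf_eq, Units.val_mul] at *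
    exact mul_mem ha hb
  inv_mem' := by
    intro a ha
    simp only [Set.mem_setOf_eq] at *
    have h1 : (a : Matrix (Fin n) (Fin n) ℝ) * star (a : Matrix (Fin n) (Fin n) ℝ) = 1 :=
      Unitary.mul_star_self_of_mem ha
    rw [Units.inv_eq_of_mul_eq_one_right h1]
    exact Unitary.star_mem ha

/-- The right action of `B : GL(n,ℝ)` on the coset space `O(n)\GL(n,ℝ)`:
`(O(n)A)·B = O(n)(AB)`. -/
def rightCosetMul (n : ℕ) (B : GL (Fin n) ℝ) :
    Quotient (QuotientGroup.rightRel (On n)) → Quotient (QuotientGroup.rightRel (On n)) :=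
  Quotient.map (· * B) (fun a b hab =>
    QuotientGroup.rightRel_apply.mpr
      (by simpa [mul_assoc] using QuotientGroup.rightRel_apply.mp hab))

open Pointwise

theorem IsOpenMap.exists_isCompact_subset_image {X Y : Type*} [TopologicalSpace X]
    [TopologicalSpace Y] [WeaklyLocallyCompactSpace X] {f : X → Y} (hf : IsOpenMap f)
    (hsurj : Function.Surjective f) {U : Set Y} (hU : IsCompact U) :
    ∃ K : Set X, IsCompact K ∧ U ⊆ f '' K := by
  choose x hx using hsurj
  choose N hNc hNx using fun y => exists_compact_mem_nhds (x y)
  obtain ⟨t, -, hUt⟩ := hU.elim_nhds_subcover (fun y => f '' N y)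
    fun y _ => by simpa only [hx y] using hf.image_mem_nhds (hNx y)
  exact ⟨⋃ y ∈ t, N y, t.isCompact_biUnion fun y _ => hNc y, by rwa [Set.image_iUnion₂]⟩

instance Matrix.locallyCompactSpace {m n R : Type*} [Finite m] [Finite n] [TopologicalSpace R]
    [LocallyCompactSpace R] : LocallyCompactSpace (Matrix m n R) :=
  inferInstanceAs (LocallyCompactSpace (m → n → R))

theorem Matrix.isCompact_unitaryGroup (ι 𝕜 : Type*) [Fintype ι] [DecidableEq ι] [RCLike 𝕜] :
    IsCompact (unitaryGroup ι 𝕜 : Set (Matrix ι ι 𝕜)) := by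
  have hbox : IsCompact (Set.univ.pi fun _ : ι => Set.univ.pi fun _ : ι =>
      Metric.closedBall (0 : 𝕜) 1) :=
    isCompact_univ_pi fun _ => isCompact_univ_pi fun _ => isCompact_closedBall 0 1
  refine hbox.of_isClosed_subset (isClosed_unitary (R := Matrix ι ι 𝕜)) ?_
  intro U hU i _ j _
  simpa using entry_norm_bound_of_unitary hU i j

theorem AddSubgroup.finite_inter_of_isCompact {G : Type*} [AddCommGroup G] [TopologicalSpace G]
    [IsTopologicalAddGroup G] [T2Space G] (Λ : AddSubgroup G) [DiscreteTopology Λ]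
    {K : Set G} (hK : IsCompact K) : ((Λ : Set G) ∩ K).Finite :=
  (hK.inter_left AddSubgroup.isClosed_of_discrete).finite
    ((isDiscrete_iff_discreteTopology.mpr ‹_›).mono Set.inter_subset_left)

theorem Matrix.finite_setOf_forall_mulVec_mem_inter {ι 𝕜 : Type*} [Fintype ι] [DecidableEq ι]
    [Field 𝕜] [TopologicalSpace 𝕜] [IsTopologicalRing 𝕜] [T2Space 𝕜]
    (Λ : AddSubgroup (ι → 𝕜)) [DiscreteTopology Λ]
    (hspan : Submodule.span 𝕜 (Λ : Set (ι → 𝕜)) = ⊤)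
    {Q : Set (Matrix ι ι 𝕜)} (hQ : IsCompact Q) :
    ({A : Matrix ι ι 𝕜 | ∀ v ∈ Λ, A *ᵥ v ∈ Λ} ∩ Q).Finite := by
  obtain ⟨b, hbΛ, hbspan, hb⟩ := exists_linearIndependent 𝕜 (Λ : Set (ι → 𝕜))
  have : Finite b := hb.setFinite
  let eval : Matrix ι ι 𝕜 → (b → ι → 𝕜) := fun A v => A *ᵥ v
  have heval_cont : Continuous eval := by fun_prop
  have heval_inj : Function.Injective eval := fun A B hAB =>
    Matrix.toLin'.injective <| LinearMap.ext_on (hbspan.trans hspan) fun v hv =>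
      congrFun hAB ⟨v, hv⟩
  refine Set.Finite.of_finite_image ?_ heval_inj.injOn
  refine (Set.Finite.pi' fun v => Λ.finite_inter_of_isCompact
    ((hQ.image heval_cont).image (continuous_apply v))).subset ?_
  rintro _ ⟨A, ⟨hAΛ, hAQ⟩, rfl⟩ v
  exact ⟨hAΛ v (hbΛ v.2), eval A, Set.mem_image_of_mem eval hAQ, rfl⟩

theorem coe_On_eq_units (n : ℕ) :
    (On n : Set (GL (Fin n) ℝ)) = (orthogonalGroup (Fin n) ℝ).units := by
  ext g
  exact ⟨fun hg => ⟨hg, (On n).inv_mem hg⟩, fun hg => hg.1⟩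

theorem isCompact_On (n : ℕ) : IsCompact (On n : Set (GL (Fin n) ℝ)) := by
  rw [coe_On_eq_units]
  exact Submonoid.units_isCompact (isCompact_unitaryGroup (Fin n) ℝ)

theorem mem_inv_mul_On_mul_of_rightCosetMul_mem {n : ℕ} {K : Set (GL (Fin n) ℝ)}
    {U : Set (Quotient (QuotientGroup.rightRel (On n)))}
    (hUK : U ⊆ Quotient.mk _ '' K) {g : GL (Fin n) ℝ} {u : Quotient (QuotientGroup.rightRel (On n))}
    (hu : u ∈ U) (hgu : rightCosetMul n g u ∈ U) :
    g ∈ K⁻¹ * (On n : Set (GL (Fin n) ℝ)) * K := by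
  obtain ⟨a, haK, rfl⟩ := hUK hu
  obtain ⟨b, hbK, hb⟩ := hUK hgu
  have hab : a * g * b⁻¹ ∈ On n := QuotientGroup.rightRel_apply.mp (Quotient.exact hb)
  have hg : g = a⁻¹ * (a * g * b⁻¹) * b := by group
  rw [hg]
  exact Set.mul_mem_mul (Set.mul_mem_mul (Set.inv_mem_inv.mpr haK) hab) hbK

/-- Let `Λ` be a full lattice in `ℝⁿ` (a discrete additive subgroup
spanning `ℝⁿ` over `ℝ`) and `H ≤ GL(n,ℝ)` a subgroup with `h(Λ) = Λ` for all `h ∈ H`.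
Then the right `H`-action on `O(n)\GL(n,ℝ)` is properly discontinuous: for every compact
`U ⊆ O(n)\GL(n,ℝ)`, the set `{h ∈ H | U·h ∩ U ≠ ∅}` is finite. -/
theorem stmt9 (n : ℕ) (Λ : AddSubgroup (Fin n → ℝ))
    (hdisc : DiscreteTopology ↥Λ)
    (hspan : Submodule.span ℝ (Λ : Set (Fin n → ℝ)) = ⊤)
    (H : Subgroup (GL (Fin n) ℝ))
    (hΛ : ∀ h ∈ H, ∀ v : Fin n → ℝ, v ∈ Λ ↔ (h : Matrix (Fin n) (Fin n) ℝ).mulVec v ∈ Λ)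
    (U : Set (Quotient (QuotientGroup.rightRel (On n)))) (hU : IsCompact U) :
    {h : ↥H | ∃ u ∈ U, rightCosetMul n (↑h : GL (Fin n) ℝ) u ∈ U}.Finite := by
  have hπ : IsOpenQuotientMap (Quotient.mk (QuotientGroup.rightRel (On n))) :=
    MulAction.isOpenQuotientMap_quotientMk
  obtain ⟨K, hK, hUK⟩ := hπ.isOpenMap.exists_isCompact_subset_image hπ.surjective hU
  set Q := K⁻¹ * (On n : Set (GL (Fin n) ℝ)) * K
  have hQ : IsCompact (Units.val '' Q) :=
    ((hK.inv.mul (isCompact_On n)).mul hK).image Units.continuous_val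
  have hfin : ({g : GL (Fin n) ℝ | ∀ v ∈ Λ, (g : Matrix (Fin n) (Fin n) ℝ) *ᵥ v ∈ Λ} ∩ Q).Finite :=
    ((Matrix.finite_setOf_forall_mulVec_mem_inter Λ hspan hQ).preimage
      Units.val_injective.injOn).subset fun g hg => ⟨hg.1, Set.mem_image_of_mem _ hg.2⟩
  refine (hfin.preimage Subtype.val_injective.injOn).subset ?_
  rintro h ⟨u, hu, hhu⟩
  exact ⟨fun v hv => (hΛ h h.2 v).mp hv, mem_inv_mul_On_mul_of_rightCosetMul_mem hUK hu hhu⟩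
end

section
/- Let W be a finite-dimensional ℚ-vector space and let Λ, Λ' ⊆ W be finitely generated additive subgroups each of which spans W over ℚ. Set Aut(Λ) = {f ∈ GL(W) | f(Λ) = Λ} and Aut(Λ') = {f ∈ GL(W) | f(Λ') = Λ'}. Then the intersection Aut(Λ) ∩ Aut(Λ') has finite index both in Aut(Λ) and in Aut(Λ'); in particular Aut(Λ) and Aut(Λ') share a common finite-index subgroup. -/
/-!
Since `Λ` is finitely generated and `Λ'` spans `W`, some `m Λ` lies in `Λ'`; symmetrically
`n Λ' ⊆ Λ`. An automorphism `g` of `Λ` sends `Λ'` to a subgroup `T` with `m Λ ⊆ T` and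
`n T ⊆ Λ`, and `T ↦ n T` embeds these subgroups into the subgroups between `n m Λ` and `Λ`,
of which there are finitely many because `Λ / n m Λ` is finite. Hence the orbit of `Λ'` under
`Aut(Λ)` is finite, and its size is the index of `Aut(Λ) ∩ Aut(Λ')` in `Aut(Λ)`.
-/

open scoped Pointwise

open MulAction

@[to_additive]
theorem Subgroup.finite_Icc_of_isFiniteRelIndex {G : Type*} [CommGroup G] {N H : Subgroup G}
    [N.IsFiniteRelIndex H] : (Set.Icc N H).Finite := by
  have : (N.subgroupOf H).FiniteIndex := isFiniteRelIndex_iff_finiteIndex.mp ‹_›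
  have : Finite (H ⧸ N.subgroupOf H) := finiteIndex_iff_finite_quotient.mp ‹_›
  have : Finite (Subgroup (H ⧸ N.subgroupOf H)) := Finite.of_injective _ SetLike.coe_injective
  have hIci : (Set.Ici (N.subgroupOf H)).Finite :=
    Set.finite_coe_iff.mp (Finite.of_equiv _ (QuotientGroup.comapMk'OrderIso _).toEquiv)
  refine hIci.of_injOn (f := (·.subgroupOf H)) (fun T hT => subgroupOf_mono _ hT.1)
    fun T hT T' hT' hTT' => ?_
  rwa [subgroupOf_inj, inf_of_le_left hT.2, inf_of_le_left hT'.2] at hTT'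

theorem MulAction.relIndex_inf_stabilizer_eq_ncard_orbit {G α : Type*} [Group G] [MulAction G α]
    (a b : α) :
    (stabilizer G a ⊓ stabilizer G b).relIndex (stabilizer G a) =
      (orbit (stabilizer G a) b).ncard := by
  rw [Subgroup.inf_relIndex_left, Subgroup.relIndex, ← index_stabilizer]
  rfl

theorem exists_nsmul_mem_of_mem_span_rat {W : Type*} [AddCommGroup W] [Module ℚ W]
    {Λ : AddSubgroup W} {x : W} (hx : x ∈ Submodule.span ℚ (Λ : Set W)) :
    ∃ n ≠ 0, n • x ∈ Λ := by
  induction hx using Submodule.span_induction with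
  | mem y hy => exact ⟨1, one_ne_zero, by rwa [one_nsmul]⟩
  | zero => exact ⟨1, one_ne_zero, by rw [smul_zero]; exact Λ.zero_mem⟩
  | add y z _ _ hy hz =>
    obtain ⟨m, hm, hmy⟩ := hy
    obtain ⟨n, hn, hnz⟩ := hz
    refine ⟨n * m, mul_ne_zero hn hm, ?_⟩
    rw [smul_add, mul_nsmul', mul_nsmul]
    exact Λ.add_mem (Λ.nsmul_mem hmy n) (Λ.nsmul_mem hnz m)
  | smul q y _ hy =>
    obtain ⟨n, hn, hny⟩ := hy
    refine ⟨q.den * n, mul_ne_zero q.den_nz hn, ?_⟩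
    have hden : (q.den * n) • q • y = q.num • n • y := by
      rw [← Nat.cast_smul_eq_nsmul ℚ, ← Int.cast_smul_eq_zsmul ℚ,
        ← Nat.cast_smul_eq_nsmul ℚ n, smul_smul, smul_smul, Nat.cast_mul, mul_right_comm,
        Rat.den_mul_eq_num]
    rw [hden]
    exact Λ.zsmul_mem hny _

section

variable {A : Type*} [AddCommGroup A]

theorem AddSubgroup.exists_map_nsmulAddMonoidHom_le_of_fg {Λ Λ' : AddSubgroup A} (hΛ : Λ.FG)
    (h : ∀ x ∈ Λ, ∃ n ≠ 0, n • x ∈ Λ') : ∃ n ≠ 0, Λ.map (nsmulAddMonoidHom n) ≤ Λ' := by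
  classical
  obtain ⟨s, rfl⟩ := hΛ
  choose! m hm0 hm using fun x hx => h x (subset_closure hx)
  refine ⟨∏ x ∈ s, m x, Finset.prod_ne_zero_iff.mpr hm0, ?_⟩
  rw [AddMonoidHom.map_closure, closure_le]
  rintro _ ⟨x, hx, rfl⟩
  obtain ⟨c, hc⟩ := Finset.dvd_prod_of_mem m hx
  rw [nsmulAddMonoidHom_apply, hc, mul_nsmul]
  exact Λ'.nsmul_mem (hm x hx) c

theorem AddSubgroup.pointwise_smul_map_nsmulAddMonoidHom {M : Type*} [Monoid M]
    [DistribMulAction M A] (a : M) (Λ : AddSubgroup A) (n : ℕ) :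
    a • Λ.map (nsmulAddMonoidHom n) = (a • Λ).map (nsmulAddMonoidHom n) := by
  refine SetLike.coe_injective ?_
  simp only [coe_pointwise_smul, coe_map]
  exact (Set.image_smul_comm _ _ _ fun x => (smul_comm a n x).symm).symm

theorem AddSubgroup.finite_setOf_map_nsmulAddMonoidHom_le [IsAddTorsionFree A]
    {Λ : AddSubgroup A} (hΛ : Λ.FG) {m n : ℕ} (hm : m ≠ 0) (hn : n ≠ 0) :
    {T : AddSubgroup A | Λ.map (nsmulAddMonoidHom m) ≤ T ∧
      T.map (nsmulAddMonoidHom n) ≤ Λ}.Finite := by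
  have := isFiniteRelIndex_map_nsmulAddMonoidHom_of_fg hΛ (mul_ne_zero hn hm)
  have hcomp : (nsmulAddMonoidHom n).comp (nsmulAddMonoidHom m) =
      nsmulAddMonoidHom (α := A) (n * m) := by
    ext x
    simp [mul_nsmul']
  refine (finite_Icc_of_isFiniteRelIndex
      (N := Λ.map (nsmulAddMonoidHom (n * m)))).of_injOn
    (f := map (nsmulAddMonoidHom n)) (fun T hT => Set.mem_Icc.mpr ⟨?_, hT.2⟩)
    (map_injective (nsmul_right_injective hn)).injOn
  rw [← hcomp, ← map_map]
  exact map_mono hT.1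

variable {G : Type*} [Group G] [DistribMulAction G A] [IsAddTorsionFree A]

theorem AddSubgroup.finite_orbit_stabilizer_of_map_nsmulAddMonoidHom_le {Λ Λ' : AddSubgroup A}
    (hΛ : Λ.FG) {m n : ℕ} (hm : m ≠ 0) (hn : n ≠ 0)
    (h : Λ.map (nsmulAddMonoidHom m) ≤ Λ') (h' : Λ'.map (nsmulAddMonoidHom n) ≤ Λ) :
    (orbit (stabilizer G (Λ : Set A)) (Λ' : Set A)).Finite := by
  refine ((finite_setOf_map_nsmulAddMonoidHom_le hΛ hm hn).image SetLike.coe).subset ?_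
  rintro _ ⟨g, rfl⟩
  have hg : (g : G) • Λ = Λ := SetLike.coe_injective g.2
  refine ⟨(g : G) • Λ', ⟨?_, ?_⟩, rfl⟩
  · calc Λ.map (nsmulAddMonoidHom m) = ((g : G) • Λ).map (nsmulAddMonoidHom m) := by rw [hg]
      _ = (g : G) • Λ.map (nsmulAddMonoidHom m) :=
          (pointwise_smul_map_nsmulAddMonoidHom _ _ _).symm
      _ ≤ (g : G) • Λ' := pointwise_smul_le_pointwise_smul_iff.mpr h
  · calc ((g : G) • Λ').map (nsmulAddMonoidHom n) = (g : G) • Λ'.map (nsmulAddMonoidHom n) :=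
          (pointwise_smul_map_nsmulAddMonoidHom _ _ _).symm
      _ ≤ (g : G) • Λ := pointwise_smul_le_pointwise_smul_iff.mpr h'
      _ = Λ := hg

theorem AddSubgroup.relIndex_inf_stabilizer_ne_zero_of_map_nsmulAddMonoidHom_le
    {Λ Λ' : AddSubgroup A} (hΛ : Λ.FG) {m n : ℕ} (hm : m ≠ 0) (hn : n ≠ 0)
    (h : Λ.map (nsmulAddMonoidHom m) ≤ Λ') (h' : Λ'.map (nsmulAddMonoidHom n) ≤ Λ) :
    (stabilizer G (Λ : Set A) ⊓ stabilizer G (Λ' : Set A)).relIndex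
      (stabilizer G (Λ : Set A)) ≠ 0 := by
  rw [relIndex_inf_stabilizer_eq_ncard_orbit]
  have hfin := finite_orbit_stabilizer_of_map_nsmulAddMonoidHom_le (G := G) hΛ hm hn h h'
  exact ((Set.ncard_pos hfin).mpr ⟨_, mem_orbit_self _⟩).ne'

end

theorem stmt12_general {W : Type*} [AddCommGroup W] [Module ℚ W]
    (Λ Λ' : AddSubgroup W) (hfg : Λ.FG) (hfg' : Λ'.FG)
    (hspan : Submodule.span ℚ (Λ : Set W) = ⊤)
    (hspan' : Submodule.span ℚ (Λ' : Set W) = ⊤) :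
    (MulAction.stabilizer (W ≃ₗ[ℚ] W) (Λ : Set W) ⊓
        MulAction.stabilizer (W ≃ₗ[ℚ] W) (Λ' : Set W)).relIndex
      (MulAction.stabilizer (W ≃ₗ[ℚ] W) (Λ : Set W)) ≠ 0 ∧
    (MulAction.stabilizer (W ≃ₗ[ℚ] W) (Λ : Set W) ⊓
        MulAction.stabilizer (W ≃ₗ[ℚ] W) (Λ' : Set W)).relIndex
      (MulAction.stabilizer (W ≃ₗ[ℚ] W) (Λ' : Set W)) ≠ 0 := by
  have := IsAddTorsionFree.of_module_rat (M := W)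
  have hmul {L : AddSubgroup W} (hL : Submodule.span ℚ (L : Set W) = ⊤) (x : W) :
      ∃ n ≠ 0, n • x ∈ L :=
    exists_nsmul_mem_of_mem_span_rat (hL ▸ Submodule.mem_top)
  obtain ⟨m, hm, h⟩ := Λ.exists_map_nsmulAddMonoidHom_le_of_fg hfg fun x _ => hmul hspan' x
  obtain ⟨n, hn, h'⟩ := Λ'.exists_map_nsmulAddMonoidHom_le_of_fg hfg' fun x _ => hmul hspan x
  refine ⟨Λ.relIndex_inf_stabilizer_ne_zero_of_map_nsmulAddMonoidHom_le hfg hm hn h h', ?_⟩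
  rw [inf_comm]
  exact Λ'.relIndex_inf_stabilizer_ne_zero_of_map_nsmulAddMonoidHom_le hfg' hn hm h' h

/-- Let `W` be a finite-dimensional `ℚ`-vector space and `Λ, Λ' ⊆ W`
lattices (finitely generated additive subgroups spanning `W` over `ℚ`).  Then
`Aut(Λ) ∩ Aut(Λ')` has finite index both in `Aut(Λ) = {f ∈ GL(W) | f(Λ) = Λ}` and in
`Aut(Λ')`; in particular the two groups share a common finite-index subgroup. -/
theorem stmt12 {W : Type*} [AddCommGroup W] [Module ℚ W] [FiniteDimensional ℚ W]
    (Λ Λ' : AddSubgroup W) (hfg : Λ.FG) (hfg' : Λ'.FG)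
    (hspan : Submodule.span ℚ (Λ : Set W) = ⊤)
    (hspan' : Submodule.span ℚ (Λ' : Set W) = ⊤) :
    (MulAction.stabilizer (W ≃ₗ[ℚ] W) (Λ : Set W) ⊓
        MulAction.stabilizer (W ≃ₗ[ℚ] W) (Λ' : Set W)).relIndex
      (MulAction.stabilizer (W ≃ₗ[ℚ] W) (Λ : Set W)) ≠ 0 ∧
    (MulAction.stabilizer (W ≃ₗ[ℚ] W) (Λ : Set W) ⊓
        MulAction.stabilizer (W ≃ₗ[ℚ] W) (Λ' : Set W)).relIndex
      (MulAction.stabilizer (W ≃ₗ[ℚ] W) (Λ' : Set W)) ≠ 0 :=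
  stmt12_general Λ Λ' hfg hfg' hspan hspan'
end

section
/- Let F be a finite group acting ℚ-linearly on a finite-dimensional ℚ-vector space V, let V = W₁ ⊕ ⋯ ⊕ W_ℓ be a direct-sum decomposition into F-invariant subspaces such that for all i ≠ j the only F-equivariant ℚ-linear map W_i → W_j is zero, and let Λ ⊆ V be a finitely generated additive subgroup spanning V over ℚ with g(Λ) = Λ for all g ∈ F. Define C = {f ∈ GL(V) | f is F-equivariant and f(Λ) = Λ} and C' = {f ∈ GL(V) | f is F-equivariant and, for every i, f(W_i) = W_i and f(Λ ∩ W_i) = Λ ∩ W_i}. Then C is a subgroup of C' of finite index. -/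
open scoped Pointwise

/-!
Centralizer elements of `F` preserve every `W i`: the `W j`-component of the restriction of such
an element to `W i` is an `F`-equivariant map `W i → W j`, hence zero for `j ≠ i`. This gives
`C ≤ C'`. For the index, let `Λ' = ⨁ (Λ ∩ W i)`. It is preserved by all of `C'`, and since `Λ`
is finitely generated and `Λ'` spans `V` over `ℚ`, some `n ≠ 0` has `n • Λ ⊆ Λ' ⊆ Λ`. Hence every
`σ • Λ` with `σ ∈ C'` lies between `Λ'` and `n⁻¹ • Λ`, and there are only finitely many subgroups
there because `n⁻¹ • Λ / Λ'` is a finitely generated torsion group. So the `C'`-orbit of `Λ` is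
finite, and `C`, its stabilizer, has finite index.
-/

namespace AddSubgroup

variable {G : Type*} [AddCommGroup G]

theorem FG.map {H : Type*} [AddGroup H] {A : AddSubgroup G} (hA : A.FG) (f : G →+ H) :
    (A.map f).FG := by
  classical
  obtain ⟨S, rfl⟩ := hA
  exact ⟨S.image f, by rw [Finset.coe_image, AddMonoidHom.map_closure]⟩

theorem FG.exists_nsmul_mem {A B : AddSubgroup G} (hB : B.FG)
    (h : ∀ b ∈ B, ∃ n ≠ 0, n • b ∈ A) : ∃ n ≠ 0, ∀ b ∈ B, n • b ∈ A := by
  obtain ⟨S, rfl⟩ := hB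
  choose! m hm0 hm using h
  refine ⟨∏ s ∈ S, m s, Finset.prod_ne_zero_iff.mpr fun s hs => hm0 s (subset_closure hs), ?_⟩
  suffices closure (S : Set G) ≤ A.comap (nsmulAddMonoidHom (∏ s ∈ S, m s)) from
    fun b hb => this hb
  rw [closure_le]
  intro s hs
  obtain ⟨k, hk⟩ := Finset.dvd_prod_of_mem m hs
  show (∏ s ∈ S, m s) • s ∈ A
  rw [hk, mul_nsmul]
  exact nsmul_mem (hm s (subset_closure hs)) k

theorem finite_setOf_le_le {A B : AddSubgroup G} (hB : B.FG) {n : ℕ} (hn : n ≠ 0)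
    (hnB : ∀ b ∈ B, n • b ∈ A) : {X : AddSubgroup G | A ≤ X ∧ X ≤ B}.Finite := by
  set π := QuotientAddGroup.mk' A
  have : AddGroup.FG (B.map π) := (AddGroup.fg_iff_addSubgroup_fg _).mpr (hB.map π)
  have : Finite (B.map π) := AddCommGroup.finite_of_fg_isAddTorsion _ fun ⟨_, b, hb, hx⟩ => by
    subst hx
    refine isOfFinAddOrder_iff_nsmul_eq_zero.mpr ⟨n, Nat.pos_of_ne_zero hn, Subtype.ext ?_⟩
    show n • π b = 0
    rw [← map_nsmul]
    exact (QuotientAddGroup.eq_zero_iff _).mpr (hnB b hb)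
  have hsub : {Y : AddSubgroup (G ⧸ A) | Y ≤ B.map π}.Finite :=
    (B.map π : Set (G ⧸ A)).toFinite.finite_subsets.preimage SetLike.coe_injective.injOn
  refine Set.Finite.of_finite_image (f := map π) (hsub.subset ?_) fun X hX Y hY hXY => ?_
  · rintro _ ⟨X, hX, rfl⟩
    exact map_mono hX.2
  · have := congr_arg (comap π) hXY
    simp only [π, QuotientAddGroup.comap_map_mk'] at this
    rwa [sup_eq_right.mpr hX.1, sup_eq_right.mpr hY.1] at this

end AddSubgroup

section Rational

variable {V : Type*} [AddCommGroup V] [Module ℚ V]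

theorem AddSubgroup.exists_nsmul_mem_of_mem_span_rat (A : AddSubgroup V) {v : V}
    (hv : v ∈ Submodule.span ℚ (A : Set V)) : ∃ n ≠ 0, n • v ∈ A := by
  induction hv using Submodule.span_induction with
  | mem x hx => exact ⟨1, one_ne_zero, by simpa using hx⟩
  | zero => exact ⟨1, one_ne_zero, by simp⟩
  | add x y _ _ hx hy =>
    obtain ⟨m, hm, hmx⟩ := hx
    obtain ⟨k, hk, hky⟩ := hy
    refine ⟨m * k, mul_ne_zero hm hk, ?_⟩
    rw [smul_add, mul_nsmul, mul_nsmul']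
    exact A.add_mem (A.nsmul_mem hmx k) (A.nsmul_mem hky m)
  | smul q x _ hx =>
    obtain ⟨m, hm, hmx⟩ := hx
    refine ⟨q.den * m, mul_ne_zero q.den_nz hm, ?_⟩
    have : (q.den * m) • q • x = q.num • m • x := by
      rw [← Nat.cast_smul_eq_nsmul ℚ, ← Nat.cast_smul_eq_nsmul ℚ m, ← Int.cast_smul_eq_zsmul ℚ,
        smul_smul, smul_smul]
      congr 1
      push_cast
      linear_combination (m : ℚ) * Rat.den_mul_eq_num q
    rw [this]
    exact A.zsmul_mem hmx q.num

theorem span_rat_inf_toAddSubgroup {Λ : AddSubgroup V}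
    (hΛ : Submodule.span ℚ (Λ : Set V) = ⊤) (W : Submodule ℚ V) :
    Submodule.span ℚ ((Λ ⊓ W.toAddSubgroup : AddSubgroup V) : Set V) = W := by
  refine le_antisymm (Submodule.span_le.mpr fun v hv => hv.2) fun w hw => ?_
  obtain ⟨n, hn, hnw⟩ := Λ.exists_nsmul_mem_of_mem_span_rat (hΛ ▸ Submodule.mem_top (x := w))
  have hnw' : n • w ∈ Submodule.span ℚ ((Λ ⊓ W.toAddSubgroup : AddSubgroup V) : Set V) :=
    Submodule.subset_span ⟨hnw, W.toAddSubgroup.nsmul_mem hw n⟩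
  have hmem := Submodule.smul_mem _ (n : ℚ)⁻¹ hnw'
  rwa [← Nat.cast_smul_eq_nsmul ℚ, smul_smul, inv_mul_cancel₀ (by exact_mod_cast hn),
    one_smul] at hmem

theorem span_rat_iSup_inf_toAddSubgroup {ι : Type*} {Λ : AddSubgroup V}
    (hΛ : Submodule.span ℚ (Λ : Set V) = ⊤) {W : ι → Submodule ℚ V} (hW : iSup W = ⊤) :
    Submodule.span ℚ ((⨆ i, Λ ⊓ (W i).toAddSubgroup : AddSubgroup V) : Set V) = ⊤ := by
  refine eq_top_iff.mpr (hW ▸ iSup_le fun i => ?_)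
  rw [← span_rat_inf_toAddSubgroup hΛ (W i)]
  exact Submodule.span_mono (le_iSup (fun i => Λ ⊓ (W i).toAddSubgroup) i)

end Rational

theorem MulAction.relIndex_stabilizer_ne_zero_of_finite_orbit {G α : Type*} [Group G]
    [MulAction G α] {H : Subgroup G} {a : α} (h : (orbit H a).Finite) :
    (stabilizer G a).relIndex H ≠ 0 := by
  have : (stabilizer G a).subgroupOf H = stabilizer H a := by ext; rfl
  rw [Subgroup.relIndex, this, index_stabilizer]
  exact ((Set.ncard_pos h).mpr ⟨a, mem_orbit_self a⟩).ne'

theorem AddSubgroup.smul_mem_iSup_of_mem_stabilizer {G V ι : Type*} [Group G] [AddCommGroup V]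
    [DistribMulAction G V] (A : ι → AddSubgroup V) {g : G}
    (hg : ∀ i, g ∈ MulAction.stabilizer G (A i : Set V)) {x : V} (hx : x ∈ ⨆ i, A i) :
    g • x ∈ ⨆ i, A i := by
  refine AddSubgroup.iSup_induction A (C := fun x => g • x ∈ ⨆ i, A i) hx
    (fun i x hx => le_iSup A i ((MulAction.mem_stabilizer_set.mp (hg i) x).mpr hx)) (by simp)
    fun x y hx hy => ?_
  simpa only [smul_add] using add_mem hx hy

theorem relIndex_stabilizer_ne_zero_of_nsmul_mem {G V : Type*} [Group G] [AddCommGroup V]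
    [Module ℚ V] [DistribMulAction G V] {H : Subgroup G} {Λ Λ' : AddSubgroup V} (hΛ : Λ.FG)
    (hle : Λ' ≤ Λ) {n : ℕ} (hn : n ≠ 0) (hnΛ : ∀ x ∈ Λ, n • x ∈ Λ')
    (hH : ∀ g ∈ H, ∀ x ∈ Λ', g • x ∈ Λ') :
    (MulAction.stabilizer G (Λ : Set V)).relIndex H ≠ 0 := by
  have hn' : (n : ℚ) ≠ 0 := by exact_mod_cast hn
  set B := Λ.map (DistribSMul.toAddMonoidHom V (n : ℚ)⁻¹)
  have hB : ∀ y, n • y ∈ Λ → y ∈ B := fun y hy => ⟨n • y, hy, by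
    simp [← Nat.cast_smul_eq_nsmul ℚ, smul_smul, inv_mul_cancel₀ hn']⟩
  have hnB : ∀ b ∈ B, (n * n) • b ∈ Λ' := by
    rintro _ ⟨x, hx, rfl⟩
    convert hnΛ x hx using 1
    simp [← Nat.cast_smul_eq_nsmul ℚ, smul_smul, mul_assoc, mul_inv_cancel₀ hn']
  refine MulAction.relIndex_stabilizer_ne_zero_of_finite_orbit
    (((AddSubgroup.finite_setOf_le_le (hΛ.map _) (mul_ne_zero hn hn) hnB).image
      SetLike.coe).subset ?_)
  rintro _ ⟨⟨g, hg⟩, rfl⟩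
  refine ⟨g • Λ, ⟨fun x hx => ?_, fun y hy => ?_⟩, AddSubgroup.coe_pointwise_smul _ _⟩
  · exact AddSubgroup.mem_pointwise_smul_iff_inv_smul_mem.mpr (hle (hH _ (inv_mem hg) x hx))
  · obtain ⟨x, hx, rfl⟩ := (AddSubgroup.mem_smul_pointwise_iff_exists _ _ _).mp hy
    exact hB _ (hle (smul_comm n g x ▸ hH g hg _ (hnΛ x hx)))

section Decomposition

open DirectSum

variable {R V ι : Type*} [Ring R] [AddCommGroup V] [Module R V] [DecidableEq ι]
  {W : ι → Submodule R V}

theorem DirectSum.decompose_apply_of_mapsTo [Decomposition W] (T : V →ₗ[R] V)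
    (hT : ∀ i, ∀ v ∈ W i, T v ∈ W i) (v : V) (j : ι) :
    (decompose W (T v) j : V) = T (decompose W v j) := by
  induction v using Decomposition.inductionOn W with
  | zero => simp
  | @homogeneous i x =>
    by_cases hij : i = j
    · subst hij
      rw [decompose_of_mem_same W (hT i x x.2), decompose_of_mem_same W x.2]
    · rw [decompose_of_mem_ne W (hT i x x.2) hij, decompose_of_mem_ne W x.2 hij, map_zero]
  | add x y hx hy => simp only [map_add, decompose_add, add_apply, Submodule.coe_add, hx, hy]

variable {F : Type*} [Group F] (ρ : F →* (V ≃ₗ[R] V))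
  (hWinv : ∀ (g : F) (i : ι), ∀ v ∈ W i, ρ g v ∈ W i)
  (hhom : ∀ i j : ι, i ≠ j → ∀ f : ↥(W i) →ₗ[R] ↥(W j),
    (∀ (g : F) (v : ↥(W i)), (f ⟨ρ g ↑v, hWinv g i ↑v v.2⟩ : V) = ρ g ↑(f v)) → f = 0)
include hhom

theorem apply_mem_of_equivariant [Decomposition W] (f : V →ₗ[R] V)
    (hf : ∀ g v, f (ρ g v) = ρ g (f v)) {i : ι} {v : V} (hv : v ∈ W i) : f v ∈ W i := by
  classical
  have hcomp : ∀ j ≠ i, (decompose W (f v) j : V) = 0 := by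
    intro j hji
    let φ : W i →ₗ[R] W j := component R ι (fun k => W k) j ∘ₗ
      (decomposeLinearEquiv W).toLinearMap ∘ₗ f ∘ₗ (W i).subtype
    have hφ : φ = 0 := hhom i j hji.symm φ fun g w => by
      simp only [φ, LinearMap.comp_apply, Submodule.subtype_apply, ← apply_eq_component,
        LinearEquiv.coe_coe, decomposeLinearEquiv_apply, hf]
      exact decompose_apply_of_mapsTo (ρ g).toLinearMap (hWinv g) _ j
    exact congr_arg (fun ψ : W i →ₗ[R] W j => (ψ ⟨v, hv⟩ : V)) hφ
  rw [← sum_support_decompose W (f v)]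
  refine Submodule.sum_mem _ fun j _ => ?_
  by_cases hji : j = i
  · exact hji ▸ (decompose W (f v) j).2
  · exact hcomp j hji ▸ zero_mem _

theorem mem_stabilizer_of_mem_centralizer (hW : IsInternal W) {f : V ≃ₗ[R] V}
    (hf : f ∈ Subgroup.centralizer (Set.range fun g => ρ g)) (i : ι) :
    f ∈ MulAction.stabilizer (V ≃ₗ[R] V) (W i : Set V) := by
  let _ : Decomposition W := hW.chooseDecomposition
  have hpres : ∀ e ∈ Subgroup.centralizer (Set.range fun g => ρ g), ∀ v ∈ W i, e v ∈ W i :=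
    fun e he v hv => apply_mem_of_equivariant ρ hWinv hhom e.toLinearMap
      (fun g w => LinearEquiv.congr_fun (Subgroup.mem_centralizer_iff.mp he (ρ g) ⟨g, rfl⟩).symm w)
      hv
  refine MulAction.mem_stabilizer_set.mpr fun v => ⟨fun hv => ?_, hpres f hf v⟩
  simpa using hpres f⁻¹ (inv_mem hf) _ hv

end Decomposition

theorem stmt13_general {V : Type*} [AddCommGroup V] [Module ℚ V]
    {F : Type*} [Group F] (ρ : F →* (V ≃ₗ[ℚ] V))
    (ℓ : ℕ) (W : Fin ℓ → Submodule ℚ V)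
    (hinternal : DirectSum.IsInternal W)
    (hWinv : ∀ (g : F) (i : Fin ℓ), ∀ v ∈ W i, ρ g v ∈ W i)
    (hhom : ∀ i j : Fin ℓ, i ≠ j → ∀ f : ↥(W i) →ₗ[ℚ] ↥(W j),
      (∀ (g : F) (v : ↥(W i)), (f ⟨ρ g ↑v, hWinv g i ↑v v.2⟩ : V) = ρ g ↑(f v)) → f = 0)
    (Λ : AddSubgroup V) (hfg : Λ.FG)
    (hspan : Submodule.span ℚ (Λ : Set V) = ⊤) :
    (Subgroup.centralizer (Set.range fun g => ρ g) ⊓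
        MulAction.stabilizer (V ≃ₗ[ℚ] V) (Λ : Set V)) ≤
      (Subgroup.centralizer (Set.range fun g => ρ g) ⊓
        ⨅ i : Fin ℓ, (MulAction.stabilizer (V ≃ₗ[ℚ] V) (W i : Set V) ⊓
          MulAction.stabilizer (V ≃ₗ[ℚ] V) ((Λ : Set V) ∩ (W i : Set V)))) ∧
    (Subgroup.centralizer (Set.range fun g => ρ g) ⊓
        MulAction.stabilizer (V ≃ₗ[ℚ] V) (Λ : Set V)).relIndex
      (Subgroup.centralizer (Set.range fun g => ρ g) ⊓
        ⨅ i : Fin ℓ, (MulAction.stabilizer (V ≃ₗ[ℚ] V) (W i : Set V) ⊓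
          MulAction.stabilizer (V ≃ₗ[ℚ] V) ((Λ : Set V) ∩ (W i : Set V)))) ≠ 0 := by
  have hZW := fun f (hf : f ∈ Subgroup.centralizer _) =>
    mem_stabilizer_of_mem_centralizer ρ hWinv hhom hinternal hf
  refine ⟨fun f ⟨hfZ, hfΛ⟩ => ⟨hfZ, Subgroup.mem_iInf.mpr fun i => ⟨hZW _ hfZ i,
    MulAction.stabilizer_inf_stabilizer_le_stabilizer_inter ⟨hfΛ, hZW _ hfZ i⟩⟩⟩, ?_⟩
  set Λ' := ⨆ i, Λ ⊓ (W i).toAddSubgroup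
  obtain ⟨n, hn, hnΛ⟩ : ∃ n ≠ 0, ∀ x ∈ Λ, n • x ∈ Λ' := hfg.exists_nsmul_mem fun x _ =>
    Λ'.exists_nsmul_mem_of_mem_span_rat
      (by rw [span_rat_iSup_inf_toAddSubgroup hspan hinternal.submodule_iSup_eq_top]; trivial)
  refine Subgroup.relIndex_inf_ne_zero
    ((Subgroup.relIndex_eq_one.mpr inf_le_left).trans_ne one_ne_zero)
    (relIndex_stabilizer_ne_zero_of_nsmul_mem hfg (iSup_le fun _ => inf_le_left) hn hnΛ
      fun σ hσ x hx => ?_)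
  refine AddSubgroup.smul_mem_iSup_of_mem_stabilizer _ (fun i => ?_) hx
  exact (Subgroup.mem_iInf.mp hσ.2 i).2

/-- Let a finite group `F` act `ℚ`-linearly (via `ρ`) on a
finite-dimensional `ℚ`-vector space `V`, let `V = W₁ ⊕ ⋯ ⊕ W_ℓ` be a decomposition into
`F`-invariant subspaces such that for `i ≠ j` the only `F`-equivariant `ℚ`-linear map
`W_i → W_j` is zero, and let `Λ ⊆ V` be an `F`-invariant lattice.  Then
`C = {f ∈ GL(V) | f F-equivariant, f(Λ) = Λ}` is a subgroup of finite index in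
`C' = {f ∈ GL(V) | f F-equivariant, f(W_i) = W_i and f(Λ ∩ W_i) = Λ ∩ W_i for all i}`. -/
theorem stmt13 {V : Type*} [AddCommGroup V] [Module ℚ V] [FiniteDimensional ℚ V]
    {F : Type*} [Group F] [Finite F] (ρ : F →* (V ≃ₗ[ℚ] V))
    (ℓ : ℕ) (W : Fin ℓ → Submodule ℚ V)
    (hinternal : DirectSum.IsInternal W)
    (hWinv : ∀ (g : F) (i : Fin ℓ), ∀ v ∈ W i, ρ g v ∈ W i)
    (hhom : ∀ i j : Fin ℓ, i ≠ j → ∀ f : ↥(W i) →ₗ[ℚ] ↥(W j),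
      (∀ (g : F) (v : ↥(W i)), (f ⟨ρ g ↑v, hWinv g i ↑v v.2⟩ : V) = ρ g ↑(f v)) → f = 0)
    (Λ : AddSubgroup V) (hfg : Λ.FG)
    (hspan : Submodule.span ℚ (Λ : Set V) = ⊤)
    (hΛinv : ∀ g : F, ∀ v : V, v ∈ Λ ↔ ρ g v ∈ Λ) :
    (Subgroup.centralizer (Set.range fun g => ρ g) ⊓
        MulAction.stabilizer (V ≃ₗ[ℚ] V) (Λ : Set V)) ≤
      (Subgroup.centralizer (Set.range fun g => ρ g) ⊓
        ⨅ i : Fin ℓ, (MulAction.stabilizer (V ≃ₗ[ℚ] V) (W i : Set V) ⊓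
          MulAction.stabilizer (V ≃ₗ[ℚ] V) ((Λ : Set V) ∩ (W i : Set V)))) ∧
    (Subgroup.centralizer (Set.range fun g => ρ g) ⊓
        MulAction.stabilizer (V ≃ₗ[ℚ] V) (Λ : Set V)).relIndex
      (Subgroup.centralizer (Set.range fun g => ρ g) ⊓
        ⨅ i : Fin ℓ, (MulAction.stabilizer (V ≃ₗ[ℚ] V) (W i : Set V) ⊓
          MulAction.stabilizer (V ≃ₗ[ℚ] V) ((Λ : Set V) ∩ (W i : Set V)))) ≠ 0 :=
  stmt13_general ρ ℓ W hinternal hWinv hhom Λ hfg hspan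
end

section
/- Let F be a finite group acting ℚ-linearly on a finite-dimensional ℚ-vector space V such that V is irreducible as an F-representation (V ≠ 0 and the only F-invariant subspaces are 0 and V), and let Λ ⊆ V be a finitely generated additive subgroup spanning V over ℚ. Let E denote the ℝ-algebra of F-equivariant ℝ-linear endomorphisms of V ⊗_ℚ ℝ, and let R = {φ ∈ E | φ(Λ) ⊆ Λ}, where Λ is regarded as a subset of V ⊗_ℚ ℝ via v ↦ v ⊗ 1. Then R is a subring of E which is discrete (in the natural topology of the finite-dimensional ℝ-vector space E) and whose additive group spans E over ℝ; that is, (R,+) is a full lattice in the ℝ-vector space E. -/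
/-!
Choose a `ℚ`-basis `b` of `V` that is a `ℤ`-basis of `Λ`. Its base change `bR` is an `ℝ`-basis of
`ℝ ⊗ V` whose `ℤ`-span is the image of `Λ`, and an endomorphism preserves this image exactly when
its matrix in `bR` is integral; so `R` sits inside the integral matrices and is discrete. It spans
`E`: since `F` is finite, `E` is the image of the averaging operator `φ ↦ ∑ g, g⁻¹ φ g`, which is
defined over `ℚ`, so `E` is spanned by base changes of `ℚ`-linear equivariant maps, and each of
these has a nonzero integer multiple preserving `Λ`. A discrete subgroup spanning a
finite-dimensional real space is the `ℤ`-span of a basis.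
-/

open scoped TensorProduct

open Set Submodule Module

namespace MonoidHom

variable {R A F : Type*} [CommSemiring R] [Semiring A] [Algebra R A] [Group F] [Fintype F]
  (σ : F →* A)

variable (R) in
def sumOfConjugates : A →ₗ[R] A :=
  ∑ g, LinearMap.mulLeftRight R (σ g⁻¹, σ g)

theorem sumOfConjugates_apply (x : A) : σ.sumOfConjugates R x = ∑ g, σ g⁻¹ * x * σ g := by
  simp [sumOfConjugates]

theorem sumOfConjugates_mem_centralizer (x : A) :
    σ.sumOfConjugates R x ∈ Set.centralizer (Set.range σ) := by
  rintro _ ⟨h, rfl⟩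
  rw [sumOfConjugates_apply, Finset.mul_sum, Finset.sum_mul]
  refine Fintype.sum_bijective (· * h⁻¹) (Group.mulRight_bijective _) _ _ fun g ↦ ?_
  simp only [mul_inv_rev, inv_inv, map_mul, mul_assoc]
  rw [← map_mul σ h⁻¹ h, inv_mul_cancel, map_one, mul_one]

theorem sumOfConjugates_eq_card_smul {x : A} (hx : x ∈ Set.centralizer (Set.range σ)) :
    σ.sumOfConjugates R x = Fintype.card F • x := by
  rw [sumOfConjugates_apply, ← Finset.card_univ, ← Finset.sum_const]
  refine Finset.sum_congr rfl fun g _ ↦ ?_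
  rw [mul_assoc, ← hx _ ⟨g, rfl⟩, ← mul_assoc, ← map_mul, inv_mul_cancel, map_one, one_mul]

theorem map_sumOfConjugates {B R' : Type*} [Semiring B] [CommSemiring R'] [Algebra R' B]
    (f : A →+* B) (x : A) :
    f (σ.sumOfConjugates R x) = ((f : A →* B).comp σ).sumOfConjugates R' (f x) := by
  simp [sumOfConjugates_apply, map_sum, map_mul]

end MonoidHom

section BaseChange

variable {K L V : Type*} [CommRing K] [CommRing L] [Algebra K L] [AddCommGroup V] [Module K V]

theorem LinearMap.baseChange_mem_centralizer {F : Type*} [Monoid F] (σ : F →* Module.End K V)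
    {k : Module.End K V} (hk : k ∈ Subalgebra.centralizer K (Set.range σ)) :
    k.baseChange L ∈ Subalgebra.centralizer L (Set.range fun g ↦ (σ g).baseChange L) := by
  rintro _ ⟨g, rfl⟩
  have h := congrArg (Module.End.baseChangeHom K L V) (hk (σ g) ⟨g, rfl⟩)
  rwa [map_mul, map_mul] at h

theorem Set.MapsTo.baseChange {W : Type*} [AddCommGroup W] [Module K W] {k : V →ₗ[K] W}
    {s : Set V} {t : Set W} (h : MapsTo k s t) :
    MapsTo (k.baseChange L) ((fun v ↦ (1 : L) ⊗ₜ[K] v) '' s) ((fun w ↦ (1 : L) ⊗ₜ[K] w) '' t) := by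
  rintro _ ⟨v, hv, rfl⟩
  exact ⟨k v, h hv, rfl⟩

theorem Module.Basis.image_tmul_span_int {ι : Type*} (b : Basis ι K V) :
    (fun v ↦ (1 : L) ⊗ₜ[K] v) '' (span ℤ (range b) : Set V) =
      span ℤ (range (Algebra.TensorProduct.basis L b)) := by
  have hb : ⇑(Algebra.TensorProduct.basis L b) = TensorProduct.mk K L V 1 ∘ b :=
    funext (Algebra.TensorProduct.basis_apply b)
  rw [hb, range_comp, ← LinearMap.coe_restrictScalars ℤ, span_image, map_coe]
  rfl

end BaseChange

section Centralizer

variable {K L V F : Type*} [Field K] [Field L] [CharZero L] [Algebra K L] [AddCommGroup V]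
  [Module K V] [FiniteDimensional K V] [Group F] [Fintype F] (σ : F →* Module.End K V)

theorem centralizer_baseChange_subset_span :
    (Subalgebra.centralizer L (Set.range fun g ↦ (σ g).baseChange L) :
        Set (Module.End L (L ⊗[K] V))) ⊆
      ↑(span L ((fun k : Module.End K V ↦ k.baseChange L) ''
        Subalgebra.centralizer K (Set.range σ))) := by
  intro φ hφ
  have := Module.finitePresentation_of_finite K V
  let bc : Module.End K V →+* Module.End L (L ⊗[K] V) := Module.End.baseChangeHom K L V
  have hφ_span : φ ∈ span L (Set.range bc) :=
    (Module.FinitePresentation.isBaseChange_map K V V L).inductionOn φ _ (zero_mem _)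
      (fun k ↦ subset_span ⟨k, rfl⟩) (fun _ _ ↦ smul_mem _ _) (fun _ _ ↦ add_mem)
  have hsum : ((bc : _ →* _).comp σ).sumOfConjugates L φ ∈
      span L ((fun k : Module.End K V ↦ k.baseChange L) ''
        Subalgebra.centralizer K (Set.range σ)) := by
    have hmap := mem_map_of_mem (f := ((bc : _ →* _).comp σ).sumOfConjugates L) hφ_span
    rw [map_span] at hmap
    refine span_mono ?_ hmap
    rintro _ ⟨_, ⟨k, rfl⟩, rfl⟩
    exact ⟨σ.sumOfConjugates K k, σ.sumOfConjugates_mem_centralizer k,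
      σ.map_sumOfConjugates bc k⟩
  rw [MonoidHom.sumOfConjugates_eq_card_smul _ hφ] at hsum
  have hcard : (Fintype.card F : L) ≠ 0 := Nat.cast_ne_zero.2 Fintype.card_ne_zero
  simpa [← Nat.cast_smul_eq_nsmul L, hcard] using smul_mem _ (Fintype.card F : L)⁻¹ hsum

theorem centralizer_baseChange_subset_span_mapsTo {Λ : Set V}
    (hΛ : ∀ k : Module.End K V, ∃ N : ℕ, N ≠ 0 ∧ MapsTo (N • k) Λ Λ) :
    (Subalgebra.centralizer L (Set.range fun g ↦ (σ g).baseChange L) :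
        Set (Module.End L (L ⊗[K] V))) ⊆
      ↑(span L ((Subalgebra.centralizer L (Set.range fun g ↦ (σ g).baseChange L) :
        Set (Module.End L (L ⊗[K] V))) ∩
          {φ | MapsTo φ ((fun v ↦ (1 : L) ⊗ₜ[K] v) '' Λ) ((fun v ↦ (1 : L) ⊗ₜ[K] v) '' Λ)})) := by
  refine (centralizer_baseChange_subset_span σ).trans (span_le.2 ?_)
  rintro _ ⟨k, hk, rfl⟩
  obtain ⟨N, hN, hNk⟩ := hΛ k
  have hbc : k.baseChange L = (N : L)⁻¹ • (N • k).baseChange L := by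
    rw [show (N • k).baseChange L = N • k.baseChange L from
        map_nsmul (Module.End.baseChangeHom K L V) N k, ← Nat.cast_smul_eq_nsmul L, smul_smul,
      inv_mul_cancel₀ (Nat.cast_ne_zero.2 hN), one_smul]
  dsimp only
  rw [hbc]
  exact smul_mem _ _ (subset_span
    ⟨LinearMap.baseChange_mem_centralizer σ (nsmul_mem hk N), hNk.baseChange⟩)

end Centralizer

def Module.End.mapsToSubring (R : Type*) {M : Type*} [Semiring R] [AddCommGroup M] [Module R M]
    (Λ : AddSubgroup M) : Subring (Module.End R M) where
  carrier := {f | MapsTo f Λ Λ}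
  mul_mem' hf hg := hf.comp hg
  one_mem' := mapsTo_id _
  add_mem' hf hg _ hx := Λ.add_mem (hf hx) (hg hx)
  zero_mem' _ _ := Λ.zero_mem
  neg_mem' hf _ hx := Λ.neg_mem (hf hx)

theorem Module.Basis.mapsTo_span_int_iff {K M ι : Type*} [Field K] [CharZero K]
    [AddCommGroup M] [Module K M] [Fintype ι] [DecidableEq ι] (b : Basis ι K M)
    (φ : Module.End K M) :
    MapsTo φ (span ℤ (range b)) (span ℤ (range b)) ↔
      ∀ ij, ∃ m : ℤ, (b.linearMap b).repr φ ij = m := by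
  have hrepr (i j : ι) : (b.linearMap b).repr φ (i, j) = b.repr (φ (b j)) i := by
    simp [Matrix.stdBasis, LinearMap.toMatrix_apply]
  constructor
  · rintro hφ ⟨i, j⟩
    obtain ⟨m, hm⟩ := (b.mem_span_iff_repr_mem ℤ _).1 (hφ (subset_span ⟨j, rfl⟩)) i
    exact ⟨m, by rw [hrepr, ← hm, eq_intCast]⟩
  · intro hφ
    have hφ_span : φ ∈ span ℤ (range (b.linearMap b)) :=
      ((b.linearMap b).mem_span_iff_repr_mem ℤ φ).2 fun ij ↦ by
        obtain ⟨m, hm⟩ := hφ ij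
        exact ⟨m, by rw [hm, eq_intCast]⟩
    refine span_induction
      (p := fun φ _ ↦ φ ∈ Module.End.mapsToSubring K (span ℤ (range b)).toAddSubgroup) ?_
      (Subring.zero_mem _) (fun _ _ _ _ ↦ Subring.add_mem _) (fun n _ _ h ↦ zsmul_mem h n)
      hφ_span
    rintro _ ⟨ij, rfl⟩ x hx
    have hmap : (span ℤ (range b)).map ((b.linearMap b ij).restrictScalars ℤ) ≤
        span ℤ (range b) := by
      rw [map_span, span_le]
      rintro _ ⟨_, ⟨k, rfl⟩, rfl⟩
      rw [LinearMap.coe_restrictScalars, Basis.linearMap_apply_apply]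
      split_ifs
      · exact subset_span ⟨ij.1, rfl⟩
      · exact zero_mem _
    exact hmap (mem_map_of_mem hx)

theorem Module.Basis.exists_nsmul_repr_eq_intCast {M ι : Type*} [AddCommGroup M] [Module ℚ M]
    [Fintype ι] (c : Basis ι ℚ M) (x : M) :
    ∃ N : ℕ, N ≠ 0 ∧ ∀ i, ∃ m : ℤ, c.repr (N • x) i = m := by
  refine ⟨∏ i, (c.repr x i).den, Finset.prod_ne_zero_iff.2 fun i _ ↦ (c.repr x i).den_nz,
    fun i ↦ ?_⟩
  obtain ⟨m, hm⟩ := Finset.dvd_prod_of_mem (fun i ↦ (c.repr x i).den) (Finset.mem_univ i)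
  refine ⟨(c.repr x i).num * m, ?_⟩
  rw [map_nsmul, Finsupp.smul_apply, hm, nsmul_eq_mul, Int.cast_mul, Int.cast_natCast,
    ← Rat.den_mul_eq_num, Nat.cast_mul]
  ring

theorem Module.Basis.exists_nsmul_mapsTo_span_int {V ι : Type*} [AddCommGroup V] [Module ℚ V]
    [Fintype ι] (b : Basis ι ℚ V) (k : Module.End ℚ V) :
    ∃ N : ℕ, N ≠ 0 ∧ MapsTo (N • k) (span ℤ (range b)) (span ℤ (range b)) := by
  classical
  obtain ⟨N, hN, hNk⟩ := (b.linearMap b).exists_nsmul_repr_eq_intCast k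
  exact ⟨N, hN, (b.mapsTo_span_int_iff _).2 hNk⟩

theorem Submodule.exists_basis_span_int_eq_of_fg {V : Type*} [AddCommGroup V] [Module ℚ V]
    (Λ : Submodule ℤ V) (hfg : Λ.FG) (hspan : span ℚ (Λ : Set V) = ⊤) :
    ∃ b : Basis (Fin (finrank ℤ Λ)) ℚ V, span ℤ (range b) = Λ := by
  have := Module.Finite.iff_fg.2 hfg
  have : IsAddTorsionFree V := .of_module_rat V
  let w := Module.finBasis ℤ Λ
  have hw : span ℤ (range (Λ.subtype ∘ w)) = Λ := by
    rw [range_comp, ← map_span, w.span_eq, map_top, range_subtype]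
  have hli : LinearIndependent ℚ (Λ.subtype ∘ w) :=
    (LinearIndependent.iff_fractionRing ℤ ℚ).1 (w.linearIndependent.map' _ (ker_subtype Λ))
  refine ⟨Basis.mk hli ?_, by rwa [Basis.coe_mk]⟩
  rw [← span_span_of_tower ℤ, hw, hspan]

theorem IsZLattice.exists_basis_span_int_eq {W : Type*} [NormedAddCommGroup W] [NormedSpace ℝ W]
    [FiniteDimensional ℝ W] (L : Submodule ℤ W) [DiscreteTopology L] [IsZLattice ℝ L] :
    ∃ b : Basis (Fin (finrank ℝ W)) ℝ W, span ℤ (range b) = L :=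
  ⟨((Module.finBasis ℤ L).ofZLatticeBasis ℝ L).reindex (finCongr (ZLattice.rank ℝ L)), by
    rw [Basis.range_reindex, Basis.ofZLatticeBasis_span]⟩

theorem Submodule.exists_basis_span_int_eq_of_injective {M N κ : Type*} [AddCommGroup M]
    [Module ℝ M] [AddCommGroup N] [Module ℝ N] [Fintype κ] (c : Basis κ ℝ N) {f : M →ₗ[ℝ] N}
    (hf : Function.Injective f) (L : Submodule ℤ M)
    (hLc : ∀ x ∈ L, ∀ k, ∃ m : ℤ, c.repr (f x) k = m) (hL : span ℝ (L : Set M) = ⊤) :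
    ∃ b : Basis (Fin (finrank ℝ M)) ℝ M, span ℤ (range b) = L := by
  -- In the coordinates `c.equivFun ∘ f`, the image of `L` lies in `ℤ^κ`, hence is discrete.
  let g : M →ₗ[ℝ] κ → ℝ := c.equivFun.toLinearMap ∘ₗ f
  let e : M ≃ₗ[ℝ] LinearMap.range g := LinearEquiv.ofInjective g (c.equivFun.injective.comp hf)
  let eZ := e.restrictScalars ℤ
  let L' : Submodule ℤ (LinearMap.range g) := L.map (eZ : M →ₗ[ℤ] LinearMap.range g)
  have hL'_int : (L' : Set (LinearMap.range g)) ⊆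
      (↑) ⁻¹' (span ℤ (range (Pi.basisFun ℝ κ)) : Set (κ → ℝ)) := by
    rintro _ ⟨x, hx, rfl⟩
    change c.equivFun (f x) ∈ span ℤ (range (Pi.basisFun ℝ κ))
    rw [Basis.mem_span_iff_repr_mem]
    intro k
    obtain ⟨m, hm⟩ := hLc x hx k
    exact ⟨m, by simp [hm]⟩
  have : DiscreteTopology (span ℤ (range (Pi.basisFun ℝ κ)) : Set (κ → ℝ)) :=
    ZSpan.discreteTopology_pi_basisFun
  have : DiscreteTopology L' :=
    .of_subset (.preimage_of_continuous_injective _ continuous_subtype_val Subtype.val_injective)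
      hL'_int
  have : IsZLattice ℝ L' := ⟨by
    change span ℝ (e.toLinearMap '' L) = ⊤
    rw [span_image, hL, map_top, LinearEquiv.range]⟩
  obtain ⟨b, hb⟩ := IsZLattice.exists_basis_span_int_eq L'
  refine ⟨(b.map e.symm).reindex (finCongr e.finrank_eq.symm), ?_⟩
  have hbe : range (b.map e.symm) = eZ.symm '' range b := by
    rw [← range_comp]
    rfl
  rw [Basis.range_reindex, hbe, ← LinearEquiv.coe_coe, span_image, hb]
  exact (map_symm_eq_iff eZ).2 rfl

theorem Submodule.span_preimage_eq_top_of_injective {R M N : Type*} [Semiring R]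
    [AddCommMonoid M] [Module R M] [AddCommMonoid N] [Module R N] {f : M →ₗ[R] N}
    (hf : Function.Injective f) {s : Set N} (h : range f ⊆ span R (range f ∩ s)) :
    span R (f ⁻¹' s) = ⊤ := by
  apply map_injective_of_injective hf
  rw [map_span, image_preimage_eq_range_inter, map_top]
  exact le_antisymm (span_le.2 fun _ hx ↦ hx.1) h

theorem exists_basis_span_int_eq_setOf_mapsTo {V F ι : Type*} [AddCommGroup V]
    [Module ℚ V] [FiniteDimensional ℚ V] [Group F] [Fintype F] [Fintype ι] [DecidableEq ι]
    (σ : F →* Module.End ℚ V) (b : Basis ι ℚ V) (E : Subalgebra ℝ (Module.End ℝ (ℝ ⊗[ℚ] V)))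
    (hE : E = Subalgebra.centralizer ℝ (Set.range fun g ↦ (σ g).baseChange ℝ)) :
    ∃ B : Basis (Fin (finrank ℝ E)) ℝ E, (span ℤ (range B) : Set E) =
      {φ : E | MapsTo φ.1 ↑(span ℤ (range (Algebra.TensorProduct.basis ℝ b)))
        ↑(span ℤ (range (Algebra.TensorProduct.basis ℝ b)))} := by
  let bR := Algebra.TensorProduct.basis ℝ b
  let R : Subring E :=
    (Module.End.mapsToSubring ℝ (span ℤ (range bR)).toAddSubgroup).comap E.val.toRingHom
  let L := AddSubgroup.toIntSubmodule (M := E) R.toAddSubgroup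
  have hinj : Function.Injective E.val.toLinearMap := Subtype.val_injective
  have hint : ∀ φ ∈ L, ∀ ij, ∃ m : ℤ, (bR.linearMap bR).repr (E.val.toLinearMap φ) ij = m :=
    fun φ hφ ↦ (bR.mapsTo_span_int_iff φ).1 hφ
  have hspan : span ℝ (L : Set E) = ⊤ := by
    refine span_preimage_eq_top_of_injective hinj
      (s := {φ | MapsTo φ (span ℤ (range bR)) (span ℤ (range bR))}) ?_
    rw [show range E.val.toLinearMap = (E : Set _) from Subtype.range_coe, hE,
      ← b.image_tmul_span_int]
    exact centralizer_baseChange_subset_span_mapsTo σ b.exists_nsmul_mapsTo_span_int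
  obtain ⟨B, hB⟩ :=
    Submodule.exists_basis_span_int_eq_of_injective (bR.linearMap bR) hinj L hint hspan
  exact ⟨B, congrArg SetLike.coe hB⟩

theorem stmt14_general {V : Type*} [AddCommGroup V] [Module ℚ V] [FiniteDimensional ℚ V]
    {F : Type*} [Group F] [Finite F] (ρ : F →* (V ≃ₗ[ℚ] V))
    (Λ : AddSubgroup V) (hfg : Λ.FG)
    (hspan : Submodule.span ℚ (Λ : Set V) = ⊤) :
    -- `E`: the equivariant endomorphisms, as a subalgebra of `End_ℝ(ℝ ⊗_ℚ V)`
    ∀ E : Subalgebra ℝ (Module.End ℝ (ℝ ⊗[ℚ] V)),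
      E = Subalgebra.centralizer ℝ
            (Set.range fun g : F => ((ρ g).toLinearMap.baseChange ℝ : Module.End ℝ (ℝ ⊗[ℚ] V))) →
    ∀ ΛR : Set (ℝ ⊗[ℚ] V), ΛR = (fun v : V => (1 : ℝ) ⊗ₜ[ℚ] v) '' (Λ : Set V) →
    ∀ R : Set ↥E, R = {φ : ↥E | ∀ x ∈ ΛR, (φ : Module.End ℝ (ℝ ⊗[ℚ] V)) x ∈ ΛR} →
      ((1 : ↥E) ∈ R ∧
        (∀ φ ∈ R, ∀ ψ ∈ R, φ + ψ ∈ R) ∧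
        (∀ φ ∈ R, ∀ ψ ∈ R, φ * ψ ∈ R) ∧
        (∀ φ ∈ R, -φ ∈ R)) ∧
      ∃ b : Module.Basis (Fin (Module.finrank ℝ ↥E)) ℝ ↥E,
        R = (Submodule.span ℤ (Set.range ⇑b) : Set ↥E) := by
  have := Fintype.ofFinite F
  rintro E hE ΛR hΛR R rfl
  obtain ⟨b, hb⟩ := Λ.toIntSubmodule.exists_basis_span_int_eq_of_fg
    ((Submodule.fg_iff_addSubgroup_fg _).2 hfg) hspan
  have hΛR' : ΛR = span ℤ (range (Algebra.TensorProduct.basis ℝ b)) := by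
    rw [hΛR, ← b.image_tmul_span_int, hb, AddSubgroup.coe_toIntSubmodule]
  subst hΛR'
  let S : Subring E := (Module.End.mapsToSubring ℝ
    (span ℤ (range (Algebra.TensorProduct.basis ℝ b))).toAddSubgroup).comap E.val.toRingHom
  obtain ⟨B, hB⟩ := exists_basis_span_int_eq_setOf_mapsTo
    (LinearEquiv.automorphismGroup.toLinearMapMonoidHom.comp ρ) b E hE
  exact ⟨⟨S.one_mem, fun _ h _ h' ↦ S.add_mem h h', fun _ h _ h' ↦ S.mul_mem h h',
    fun _ h ↦ S.neg_mem h⟩, B, hB.symm⟩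

/-- Let a finite group `F` act `ℚ`-linearly and irreducibly on a
finite-dimensional `ℚ`-vector space `V`, and let `Λ ⊆ V` be a lattice.  Let `E` be the
`ℝ`-algebra of `F`-equivariant `ℝ`-linear endomorphisms of `V ⊗_ℚ ℝ`, and let
`R = {φ ∈ E | φ(Λ) ⊆ Λ}` (with `Λ` viewed inside `V ⊗_ℚ ℝ` via `v ↦ 1 ⊗ v`).  Then `R` is
a subring of `E` and `(R,+)` is a full lattice in the `ℝ`-vector space `E`: it is the
`ℤ`-span of an `ℝ`-basis of `E` (the standard topology-free formulation of being a
discrete additive subgroup that spans `E` over `ℝ`). -/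
theorem stmt14 {V : Type*} [AddCommGroup V] [Module ℚ V] [FiniteDimensional ℚ V]
    {F : Type*} [Group F] [Finite F] (ρ : F →* (V ≃ₗ[ℚ] V))
    (hirr : Nontrivial V ∧
      ∀ p : Submodule ℚ V, (∀ g : F, ∀ v ∈ p, ρ g v ∈ p) → p = ⊥ ∨ p = ⊤)
    (Λ : AddSubgroup V) (hfg : Λ.FG)
    (hspan : Submodule.span ℚ (Λ : Set V) = ⊤) :
    -- `E`: the equivariant endomorphisms, as a subalgebra of `End_ℝ(ℝ ⊗_ℚ V)`
    ∀ E : Subalgebra ℝ (Module.End ℝ (ℝ ⊗[ℚ] V)),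
      E = Subalgebra.centralizer ℝ
            (Set.range fun g : F => ((ρ g).toLinearMap.baseChange ℝ : Module.End ℝ (ℝ ⊗[ℚ] V))) →
    ∀ ΛR : Set (ℝ ⊗[ℚ] V), ΛR = (fun v : V => (1 : ℝ) ⊗ₜ[ℚ] v) '' (Λ : Set V) →
    ∀ R : Set ↥E, R = {φ : ↥E | ∀ x ∈ ΛR, (φ : Module.End ℝ (ℝ ⊗[ℚ] V)) x ∈ ΛR} →
      ((1 : ↥E) ∈ R ∧
        (∀ φ ∈ R, ∀ ψ ∈ R, φ + ψ ∈ R) ∧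
        (∀ φ ∈ R, ∀ ψ ∈ R, φ * ψ ∈ R) ∧
        (∀ φ ∈ R, -φ ∈ R)) ∧
      ∃ b : Module.Basis (Fin (Module.finrank ℝ ↥E)) ℝ ↥E,
        R = (Submodule.span ℤ (Set.range ⇑b) : Set ↥E) :=
  stmt14_general ρ Λ hfg hspan
end

section
/- Let K/ℚ be a finite Galois extension of number fields and V a finite-dimensional ℚ-vector space. Let Gal(K/ℚ) act on V ⊗_ℚ K by σ·(v ⊗ k) = v ⊗ σ(k). Suppose U ⊆ V ⊗_ℚ K is a K-linear subspace such that V ⊗_ℚ K is the internal direct sum ⊕_{σ ∈ Gal(K/ℚ)} U^σ of the Galois translates U^σ = {σ·u | u ∈ U}. Then the image of V in V ⊗_ℚ K under v ↦ v ⊗ 1 equals the set {Σ_{σ ∈ Gal(K/ℚ)} σ·u | u ∈ U}. -/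
/-!
The Galois group acts on `K ⊗[F] V` through the first factor, and its fixed vectors are exactly
`1 ⊗ V`: the coordinates of a fixed vector in a basis of `V` are Galois-fixed elements of `K`,
hence lie in `F`. If the translates `σ • U` form a direct sum, then `τ` carries the decomposition
`x = ∑ σ, t σ` of a fixed vector to the decomposition `x = ∑ σ, τ • t (τ⁻¹ * σ)`, so uniqueness
forces `t σ = σ • t 1`, i.e. `x = ∑ σ, σ • t 1`; conversely every orbit sum is fixed.
-/

open scoped TensorProduct Pointwise

section FixedPoints

variable {G M : Type*} [Group G] [Fintype G] [AddCommMonoid M] [DistribMulAction G M]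

theorem sum_smul_mem_fixedPoints (u : M) : ∑ g : G, g • u ∈ MulAction.fixedPoints G M :=
  fun τ => by
    simp only [Finset.smul_sum, smul_smul]
    exact Equiv.sum_comp (Equiv.mulLeft τ) (· • u)

theorem exists_eq_sum_smul_of_mem_fixedPoints {U : Set M} {x : M}
    (hx : x ∈ MulAction.fixedPoints G M)
    (hdecomp : ∃! t : G → M, (∀ g, t g ∈ g • U) ∧ x = ∑ g, t g) :
    ∃ u ∈ U, x = ∑ g : G, g • u := by
  obtain ⟨t, ⟨ht, hsum⟩, huniq⟩ := hdecomp
  have htranslate (τ : G) : (fun g => τ • t (τ⁻¹ * g)) = t := by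
    refine huniq _ ⟨fun g => ?_, ?_⟩
    · simpa [smul_smul] using Set.smul_mem_smul_set (a := τ) (ht (τ⁻¹ * g))
    · calc x = τ • x := (hx τ).symm
        _ = ∑ g, τ • t (τ⁻¹ * g) := by
          rw [hsum, Finset.smul_sum]
          exact Fintype.sum_equiv (Equiv.mulLeft τ) _ _ fun g => by simp
  refine ⟨t 1, by simpa using ht 1, hsum.trans (Finset.sum_congr rfl fun τ _ => ?_)⟩
  simpa using (congrFun (htranslate τ) τ).symm

theorem fixedPoints_eq_setOf_sum_smul {U : Set M}
    (hdirect : ∀ x : M, ∃! t : G → M, (∀ g, t g ∈ g • U) ∧ x = ∑ g, t g) :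
    MulAction.fixedPoints G M = {x | ∃ u ∈ U, x = ∑ g : G, g • u} := by
  ext x
  refine ⟨fun hx => exists_eq_sum_smul_of_mem_fixedPoints hx (hdirect x), ?_⟩
  rintro ⟨u, -, rfl⟩
  exact sum_smul_mem_fixedPoints u

end FixedPoints

section GaloisDescent

variable {F K V : Type*} [Field F] [Field K] [Algebra F K] [AddCommGroup V] [Module F V]

theorem TensorProduct.algEquiv_smul_eq_rTensor (σ : K ≃ₐ[F] K) (x : K ⊗[F] V) :
    σ • x = LinearMap.rTensor V σ.toLinearMap x := by
  induction x with
  | zero => simp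
  | tmul k v => rfl
  | add x y hx hy => simp only [smul_add, map_add, hx, hy]

theorem Module.Basis.baseChange_repr_algEquiv_smul {ι : Type*} (b : Basis ι F V)
    (σ : K ≃ₐ[F] K) (x : K ⊗[F] V) (i : ι) :
    (b.baseChange K).repr (σ • x) i = σ ((b.baseChange K).repr x i) := by
  induction x with
  | zero => simp
  | tmul k v => simp [TensorProduct.smul_tmul', Basis.baseChange_repr_tmul]
  | add x y hx hy => simp only [smul_add, map_add, Finsupp.add_apply, hx, hy]

theorem IsGalois.range_one_tmul_eq_fixedPoints [IsGalois F K] :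
    Set.range (fun v : V => (1 : K) ⊗ₜ[F] v) = MulAction.fixedPoints (K ≃ₐ[F] K) (K ⊗[F] V) := by
  refine subset_antisymm ?_ fun x hx => ?_
  · rintro _ ⟨v, rfl⟩ σ
    change σ 1 ⊗ₜ[F] v = 1 ⊗ₜ v
    rw [map_one]
  let b := Module.Free.chooseBasis F V
  have hcoord (i) : (b.baseChange K).repr x i ∈ Set.range (algebraMap F K) :=
    (InfiniteGalois.mem_range_algebraMap_iff_fixed _).2 fun σ => by
      rw [← b.baseChange_repr_algEquiv_smul, hx σ]
  change x ∈ LinearMap.range (TensorProduct.mk F K V 1)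
  rw [← (b.baseChange K).linearCombination_repr x, Finsupp.linearCombination_apply]
  refine Submodule.finsuppSum_mem _ _ _ _ fun i _ => ?_
  obtain ⟨q, hq⟩ := hcoord i
  rw [← hq, algebraMap_smul, Module.Basis.baseChange_apply]
  exact Submodule.smul_mem _ q ⟨b i, rfl⟩

end GaloisDescent

theorem stmt15_general (K : Type*) [Field K] [NumberField K] [IsGalois ℚ K]
    {V : Type*} [AddCommGroup V] [Module ℚ V]
    (U : Submodule K (K ⊗[ℚ] V))
    (hdirect : ∀ x : K ⊗[ℚ] V, ∃! t : (K ≃ₐ[ℚ] K) → (K ⊗[ℚ] V),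
      (∀ σ : K ≃ₐ[ℚ] K, t σ ∈ (LinearMap.rTensor V σ.toLinearMap) '' (U : Set (K ⊗[ℚ] V))) ∧
        x = ∑ σ : K ≃ₐ[ℚ] K, t σ) :
    Set.range (fun v : V => ((1 : K) ⊗ₜ[ℚ] v : K ⊗[ℚ] V)) =
      {x : K ⊗[ℚ] V | ∃ u ∈ U, x = ∑ σ : K ≃ₐ[ℚ] K, LinearMap.rTensor V σ.toLinearMap u} := by
  have hsmul : ∀ σ : K ≃ₐ[ℚ] K, ⇑(LinearMap.rTensor V σ.toLinearMap) = (σ • ·) := fun σ =>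
    funext fun x => (TensorProduct.algEquiv_smul_eq_rTensor σ x).symm
  simp only [hsmul, Set.image_smul] at hdirect ⊢
  rw [IsGalois.range_one_tmul_eq_fixedPoints, fixedPoints_eq_setOf_sum_smul hdirect]
  rfl

/-- Let `K/ℚ` be a finite Galois extension and `V` a finite-dimensional
`ℚ`-vector space, with `Gal(K/ℚ)` acting on `K ⊗_ℚ V` via `σ·(k ⊗ v) = σ(k) ⊗ v`.
If `U ⊆ K ⊗_ℚ V` is a `K`-subspace such that `K ⊗_ℚ V` is the internal direct sum
`⊕_σ U^σ` of the Galois translates of `U`, then the image of `V` in `K ⊗_ℚ V` (under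
`v ↦ 1 ⊗ v`) equals `{Σ_σ σ·u | u ∈ U}`. -/
theorem stmt15 (K : Type*) [Field K] [NumberField K] [IsGalois ℚ K]
    {V : Type*} [AddCommGroup V] [Module ℚ V] [FiniteDimensional ℚ V]
    (U : Submodule K (K ⊗[ℚ] V))
    (hdirect : ∀ x : K ⊗[ℚ] V, ∃! t : (K ≃ₐ[ℚ] K) → (K ⊗[ℚ] V),
      (∀ σ : K ≃ₐ[ℚ] K, t σ ∈ (LinearMap.rTensor V σ.toLinearMap) '' (U : Set (K ⊗[ℚ] V))) ∧
        x = ∑ σ : K ≃ₐ[ℚ] K, t σ) :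
    Set.range (fun v : V => ((1 : K) ⊗ₜ[ℚ] v : K ⊗[ℚ] V)) =
      {x : K ⊗[ℚ] V | ∃ u ∈ U, x = ∑ σ : K ≃ₐ[ℚ] K, LinearMap.rTensor V σ.toLinearMap u} :=
  stmt15_general K U hdirect
end

section
/- Let R be a (not necessarily commutative) ring with identity whose additive group is finitely generated, and let S ⊆ R be a subring (containing 1) such that the additive group of S has finite index in the additive group of R. Then for every m ≥ 1, the inclusion S ↪ R induces an injective group homomorphism from the unit group of the matrix ring Mat_m(S) to the unit group of Mat_m(R), i.e. GL_m(S) → GL_m(R), whose image is a finite-index subgroup of GL_m(R). -/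
/-!
If `n` is the additive index of the subring, the two-sided ideal `n A` lies in the subring and
`A ⧸ n A` is finite, since `(A, +)` is finitely generated and killed by `n`. The congruence
subgroup `ker (Aˣ → (A ⧸ n A)ˣ)` therefore has finite index, and it consists of units `u` with
`u - 1, u⁻¹ - 1 ∈ n A`, i.e. of units of the subring. Applied to `A = Mat_m(R)`, whose additive
group is finitely generated and in which `Mat_m(S)` has index `[R : S] ^ (m * m)`, this gives
the theorem.
-/

namespace Ideal

variable {A : Type*} [Ring A]

instance isTwoSided_span_natCast (n : ℕ) : (span {(n : A)}).IsTwoSided :=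
  ⟨fun b ha => by
    obtain ⟨a, rfl⟩ := mem_span_singleton'.1 ha
    exact mem_span_singleton'.2 ⟨a * b, by rw [mul_assoc, mul_assoc, Nat.cast_comm]⟩⟩

theorem span_natCast_index_le (T : AddSubgroup A) :
    (span {(T.index : A)} : Set A) ⊆ T := by
  intro x hx
  obtain ⟨a, rfl⟩ := mem_span_singleton'.1 (SetLike.mem_coe.1 hx)
  simpa [nsmul_eq_mul, Nat.cast_comm] using T.nsmul_index_mem a

theorem finite_quotient_span_natCast [AddGroup.FG A] {n : ℕ} (hn : n ≠ 0) :
    Finite (A ⧸ span {(n : A)}) := by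
  have : AddGroup.FG (A ⧸ span {(n : A)}) :=
    AddGroup.fg_of_surjective (f := (Quotient.mk (span {(n : A)})).toAddMonoidHom)
      Quotient.mk_surjective
  refine AddCommGroup.finite_of_fg_isAddTorsion _ fun x => ?_
  obtain ⟨a, rfl⟩ := Quotient.mk_surjective x
  refine isOfFinAddOrder_iff_nsmul_eq_zero.2 ⟨n, Nat.pos_of_ne_zero hn, ?_⟩
  rw [← map_nsmul, Quotient.eq_zero_iff_mem, nsmul_eq_mul, Nat.cast_comm]
  exact mul_mem_left _ a (subset_span rfl)

end Ideal

namespace RingHom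

variable {A B : Type*} [Ring A] [Ring B]

theorem ker_unitsMap_mk_le_range_unitsMap {f : B →+* A} (hf : Function.Injective f)
    (I : Ideal A) [I.IsTwoSided] (hI : (I : Set A) ⊆ Set.range f) :
    (Units.map (Ideal.Quotient.mk I).toMonoidHom).ker ≤ (Units.map f.toMonoidHom).range := by
  intro u hu
  have lift : ∀ v : Aˣ, Units.map (Ideal.Quotient.mk I).toMonoidHom v = 1 → ∃ b, f b = v := by
    intro v hv
    have : (v : A) - 1 ∈ I := by
      rw [← Ideal.Quotient.eq]
      simpa [Units.ext_iff] using hv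
    obtain ⟨c, hc⟩ := hI this
    exact ⟨c + 1, by simp [hc]⟩
  obtain ⟨b, hb⟩ := lift u hu
  obtain ⟨c, hc⟩ := lift u⁻¹ (by simpa using hu)
  refine ⟨⟨b, c, hf ?_, hf ?_⟩, Units.ext hb⟩ <;> simp [hb, hc]

theorem index_range_unitsMap_ne_zero [AddGroup.FG A] {f : B →+* A} (hf : Function.Injective f)
    (hidx : f.toAddMonoidHom.range.index ≠ 0) :
    (Units.map f.toMonoidHom).range.index ≠ 0 := by
  set I := Ideal.span {(f.toAddMonoidHom.range.index : A)}
  have : _root_.Finite (A ⧸ I) := Ideal.finite_quotient_span_natCast hidx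
  have hΓ : (Units.map (Ideal.Quotient.mk I).toMonoidHom).ker.index ≠ 0 := by
    rw [Subgroup.index_ker]
    exact Nat.card_pos.ne'
  exact ne_zero_of_dvd_ne_zero hΓ <| Subgroup.index_dvd_of_le <|
    ker_unitsMap_mk_le_range_unitsMap hf I (Ideal.span_natCast_index_le _)

end RingHom

instance Matrix.addGroupFG {m n α : Type*} [Finite m] [Finite n] [AddCommGroup α]
    [AddGroup.FG α] : AddGroup.FG (Matrix m n α) :=
  have : Module.Finite ℤ α := Module.Finite.iff_addGroup_fg.2 ‹_›
  Module.Finite.iff_addGroup_fg.1 (inferInstanceAs (Module.Finite ℤ (m → n → α)))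

theorem Subring.index_range_mapMatrix {R : Type*} [Ring R] (S : Subring R) (n : Type*)
    [Fintype n] [DecidableEq n] :
    (S.subtype.mapMatrix : Matrix n n S →+* Matrix n n R).toAddMonoidHom.range.index =
      S.toAddSubgroup.index ^ (Fintype.card n * Fintype.card n) := by
  have : (S.subtype.mapMatrix : Matrix n n S →+* Matrix n n R).toAddMonoidHom.range =
      (AddSubgroup.pi Set.univ fun _ : n => AddSubgroup.pi Set.univ fun _ : n =>
        S.toAddSubgroup).map
        ((Matrix.ofAddEquiv : (n → n → R) ≃+ Matrix n n R) : (n → n → R) →+ Matrix n n R) := by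
    ext M
    simp only [AddMonoidHom.mem_range, AddSubgroup.mem_map, AddSubgroup.mem_pi, Set.mem_univ,
      forall_const, Subring.mem_toAddSubgroup, AddMonoidHom.coe_coe, Matrix.coe_ofAddEquiv]
    constructor
    · rintro ⟨N, rfl⟩
      exact ⟨fun i j => N i j, fun i j => (N i j).2, rfl⟩
    · rintro ⟨N, hN, rfl⟩
      exact ⟨fun i j => ⟨N i j, hN i j⟩, rfl⟩
  rw [this, AddSubgroup.index_map_equiv, AddSubgroup.index_pi]
  simp [pow_mul]

theorem stmt18_general {R : Type*} [Ring R] (hfg : AddGroup.FG R)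
    (S : Subring R) (hidx : S.toAddSubgroup.index ≠ 0)
    (m : ℕ) :
    Function.Injective
      (Units.map (S.subtype.mapMatrix :
          Matrix (Fin m) (Fin m) ↥S →+* Matrix (Fin m) (Fin m) R).toMonoidHom) ∧
    (Units.map (S.subtype.mapMatrix :
          Matrix (Fin m) (Fin m) ↥S →+* Matrix (Fin m) (Fin m) R).toMonoidHom).range.index ≠ 0 := by
  have hinj : Function.Injective
      (S.subtype.mapMatrix : Matrix (Fin m) (Fin m) S →+* Matrix (Fin m) (Fin m) R) :=
    Matrix.map_injective Subtype.val_injective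
  refine ⟨Units.map_injective hinj, RingHom.index_range_unitsMap_ne_zero hinj ?_⟩
  rw [Subring.index_range_mapMatrix]
  exact pow_ne_zero _ hidx

/-- Let `R` be a ring with identity whose additive group is finitely
generated, and let `S ⊆ R` be a subring whose additive group has finite index in `(R,+)`.
Then for every `m ≥ 1` the inclusion `S ↪ R` induces an injective group homomorphism
`GL_m(S) → GL_m(R)` whose image has finite index in `GL_m(R)`. -/
theorem stmt18 {R : Type*} [Ring R] (hfg : AddGroup.FG R)
    (S : Subring R) (hidx : S.toAddSubgroup.index ≠ 0)
    (m : ℕ) (hm : 1 ≤ m) :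
    Function.Injective
      (Units.map (S.subtype.mapMatrix :
          Matrix (Fin m) (Fin m) ↥S →+* Matrix (Fin m) (Fin m) R).toMonoidHom) ∧
    (Units.map (S.subtype.mapMatrix :
          Matrix (Fin m) (Fin m) ↥S →+* Matrix (Fin m) (Fin m) R).toMonoidHom).range.index ≠ 0 :=
  stmt18_general hfg S hidx m
end
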